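/- arXiv:1209.2522 — 3 statements merged into one kernel-verified Lean document; each statement's English description precedes it below -/
import Mathlib

section
/- Let N ≥ 5, μ₁, μ₂, β > 0 and 2* = 2N/(N-2). Suppose U, V : ℝᴺ → ℝ are twice continuously differentiable, positive, radially symmetric with radially non-increasing profiles, satisfy ∫_{ℝᴺ} |∇U|² dx < ∞, ∫_{ℝᴺ} |∇V|² dx < ∞, ∫_{ℝᴺ} U^{2*} dx < ∞, ∫_{ℝᴺ} V^{2*} dx < ∞, and solve pointwise on ℝᴺ the system −ΔU = μ₁ U^{2*-1} + β U^{2*/2-1} V^{2*/2}, −ΔV = μ₂ V^{2*-1} + β V^{2*/2-1} U^{2*/2}. Then there exists C > 0 such that U(x) + V(x) ≤ C(1 + |x|)^{2-N} and |∇U(x)| + |∇V(x)| ≤ C(1 + |x|)^{1-N} for all x ∈ ℝᴺ. -/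
/-!
Let `w = φ + χ` be the sum of the (nonincreasing) radial profiles of `U` and `V`. In radial
coordinates the system gives `-(w'' + (N - 1) / r * w') ≤ K w ^ (2* - 1)`, `K = μ₁ + μ₂ + 2β`.
Since `w` is nonincreasing, the `L^{2*}` mass of the annulus `r/2 ≤ |x| ≤ r` is at least
`c r^N w(r)^{2*}`, so `∫ U^{2*}, ∫ V^{2*} < ∞` force `r ^ ((N - 2)/2) w(r) → 0`. Hence for large
`r` the nonlinearity is a small Hardy potential, `K w ^ (2* - 2) ≤ 1 / (2 r²)`, and comparison
with `A r^{-(N - 5/2)} + ε r^{-1/2}` gives `w = O(r^{-(N - 5/2)})`. At this rate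
`r^{N-1} w^{2* - 1}` is integrable at infinity, so `r^{N-1} w'` is bounded, i.e.
`|∇U| + |∇V| = -w' = O(r^{1-N})`, and integrating from infinity gives `w = O(r^{2-N})`.
Bounded `|x|` is handled by continuity.
-/

open Real MeasureTheory

/-- The `i`-th pure second partial derivative of `f` at `x`. -/
noncomputable def secondPartial {N : ℕ} (f : EuclideanSpace ℝ (Fin N) → ℝ)
    (x : EuclideanSpace ℝ (Fin N)) (i : Fin N) : ℝ :=
  fderiv ℝ (fun y => fderiv ℝ f y (EuclideanSpace.single i 1)) x (EuclideanSpace.single i 1)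

/-- The Euclidean Laplacian: the sum of the pure second partial derivatives
(equivalently, the trace of the second derivative). -/
noncomputable def lap {N : ℕ} (f : EuclideanSpace ℝ (Fin N) → ℝ)
    (x : EuclideanSpace ℝ (Fin N)) : ℝ :=
  ∑ i : Fin N, secondPartial f x i

open Set Filter Topology Metric Module

theorem HasDerivAt.nonpos_of_antitoneOn_Ici {φ : ℝ → ℝ} {φ' a r : ℝ} (hφ : AntitoneOn φ (Ici a))
    (hr : a < r) (hd : HasDerivAt φ φ' r) : φ' ≤ 0 :=
  hd.hasDerivWithinAt.nonpos_of_antitoneOn (accPt_principal_iff_nhdsWithin.2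
    ((nhdsGT_neBot r).mono (nhdsWithin_mono r fun y (hy : r < y) =>
      ⟨(hr.trans hy).le, hy.ne'⟩))) hφ

section Radial

variable {E : Type*} [NormedAddCommGroup E] [InnerProductSpace ℝ E]

theorem hasFDerivAt_norm {x : E} (hx : x ≠ 0) :
    HasFDerivAt (‖·‖) (‖x‖⁻¹ • innerSL ℝ x) x := by
  have hx' : ‖x‖ ^ 2 ≠ 0 := by positivity
  convert ((hasStrictFDerivAt_norm_sq x).hasFDerivAt.sqrt hx') using 1
  · ext y; simp [Real.sqrt_sq (norm_nonneg y)]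
  · ext y
    simp [Real.sqrt_sq (norm_nonneg x)]
    field_simp

theorem hasFDerivAt_radial {φ : ℝ → ℝ} {φ' : ℝ} {x : E} (hx : x ≠ 0)
    (hφ : HasDerivAt φ φ' ‖x‖) :
    HasFDerivAt (fun y => φ ‖y‖) ((φ' * ‖x‖⁻¹) • innerSL ℝ x) x := by
  have := hφ.comp_hasFDerivAt x (hasFDerivAt_norm hx)
  rwa [smul_smul] at this

theorem norm_fderiv_radial {φ : ℝ → ℝ} {x : E} (hx : x ≠ 0) (hφ : DifferentiableAt ℝ φ ‖x‖) :
    ‖fderiv ℝ (fun y => φ ‖y‖) x‖ = |deriv φ ‖x‖| := by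
  rw [(hasFDerivAt_radial hx hφ.hasDerivAt).fderiv, norm_smul, innerSL_apply_norm,
    Real.norm_eq_abs, abs_mul, abs_inv, abs_norm, inv_mul_cancel_right₀ (norm_ne_zero_iff.2 hx)]

theorem norm_fderiv_radial_of_antitoneOn {φ : ℝ → ℝ} (hφ : AntitoneOn φ (Ici 0)) {x : E}
    (hx : x ≠ 0) (hd : DifferentiableAt ℝ φ ‖x‖) :
    ‖fderiv ℝ (fun y => φ ‖y‖) x‖ = -deriv φ ‖x‖ := by
  rw [norm_fderiv_radial hx hd,
    abs_of_nonpos (hd.hasDerivAt.nonpos_of_antitoneOn_Ici hφ (norm_pos_iff.2 hx))]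

theorem fderiv_fderiv_radial_apply {φ : ℝ → ℝ} (hφ : ContDiff ℝ 2 φ) {x : E} (hx : x ≠ 0)
    (v : E) :
    fderiv ℝ (fun y => fderiv ℝ (fun z => φ ‖z‖) y v) x v =
      deriv φ ‖x‖ / ‖x‖ * ‖v‖ ^ 2 +
        (deriv (deriv φ) ‖x‖ / ‖x‖ - deriv φ ‖x‖ / ‖x‖ ^ 2) * inner ℝ x v ^ 2 / ‖x‖ := by
  have hr : ‖x‖ ≠ 0 := norm_ne_zero_iff.2 hx
  have hφ1 : Differentiable ℝ φ := hφ.differentiable (by norm_num)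
  have hφ2 : Differentiable ℝ (deriv φ) := hφ.differentiable_deriv_two
  have hev : (fun y => fderiv ℝ (fun z => φ ‖z‖) y v)
      =ᶠ[𝓝 x] fun y => deriv φ ‖y‖ / ‖y‖ * inner ℝ y v := by
    filter_upwards [isOpen_compl_singleton.mem_nhds hx] with y hy
    rw [(hasFDerivAt_radial hy (hφ1 _).hasDerivAt).fderiv]
    simp [div_eq_mul_inv]
  have hψ : HasDerivAt (fun t => deriv φ t / t)
      (deriv (deriv φ) ‖x‖ / ‖x‖ - deriv φ ‖x‖ / ‖x‖ ^ 2) ‖x‖ := by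
    refine ((hφ2 ‖x‖).hasDerivAt.fun_div (hasDerivAt_id' ‖x‖) hr).congr_deriv ?_
    field_simp
  have hinner : HasFDerivAt (fun y => inner ℝ y v) (innerSL ℝ v) x := by
    convert (innerSL ℝ v).hasFDerivAt using 1
    ext y
    simp [real_inner_comm]
  rw [hev.fderiv_eq, ((hasFDerivAt_radial hx hψ).fun_mul hinner).fderiv]
  simp only [add_apply, smul_apply, innerSL_apply_apply,
    smul_eq_mul, real_inner_self_eq_norm_sq]
  rw [real_inner_comm v x]
  field_simp

theorem lap_radial {N : ℕ} {φ : ℝ → ℝ} (hφ : ContDiff ℝ 2 φ) {x : EuclideanSpace ℝ (Fin N)}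
    (hx : x ≠ 0) :
    lap (fun y => φ ‖y‖) x = deriv (deriv φ) ‖x‖ + (N - 1) / ‖x‖ * deriv φ ‖x‖ := by
  have hr : ‖x‖ ≠ 0 := norm_ne_zero_iff.2 hx
  have hsum : ∑ i : Fin N, inner ℝ x (EuclideanSpace.single i (1 : ℝ)) ^ 2 = ‖x‖ ^ 2 := by
    simp [EuclideanSpace.real_norm_sq_eq, EuclideanSpace.inner_single_right]
  simp only [lap, secondPartial, fderiv_fderiv_radial_apply hφ hx, PiLp.norm_single,
    norm_one, one_pow, mul_one, Finset.sum_add_distrib, ← Finset.sum_div, ← Finset.mul_sum, hsum,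
    Finset.sum_const, Finset.card_univ, Fintype.card_fin, nsmul_eq_mul]
  field_simp
  ring

end Radial

theorem exists_contDiff_antitoneOn_profile {F : Type*} [NormedAddCommGroup F] [NormedSpace ℝ F]
    [Nontrivial F] {n : WithTop ℕ∞} {f : F → ℝ} (hf : ContDiff ℝ n f)
    (hrad : ∃ ψ : ℝ → ℝ, AntitoneOn ψ (Ici 0) ∧ ∀ x, f x = ψ ‖x‖) :
    ∃ φ : ℝ → ℝ, ContDiff ℝ n φ ∧ AntitoneOn φ (Ici 0) ∧ f = fun x => φ ‖x‖ := by
  obtain ⟨ψ, hψ, hrad⟩ := hrad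
  obtain ⟨e, he⟩ := exists_norm_eq F zero_le_one
  have heq : EqOn (fun r => f (r • e)) ψ (Ici 0) := fun r (hr : 0 ≤ r) => by
    simp [hrad, norm_smul, he, abs_of_nonneg hr]
  exact ⟨_, hf.comp (contDiff_id.smul contDiff_const), heq.congr_antitoneOn.2 hψ,
    funext fun x => (hrad x).trans (heq (norm_nonneg x)).symm⟩

theorem le_max_of_deriv_eq_mul_monotoneOn {g ρ P : ℝ → ℝ} {a b : ℝ}
    (hgc : ContinuousOn g (Icc a b)) (hgd : DifferentiableOn ℝ g (Ioo a b))
    (hd : ∀ x ∈ Ioo a b, deriv g x = ρ x * P x) (hρ : ∀ x ∈ Ioo a b, 0 < ρ x)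
    (hP : MonotoneOn P (Ioo a b)) {x : ℝ} (hx : x ∈ Icc a b) :
    g x ≤ max (g a) (g b) := by
  rcases hx.1.eq_or_lt with rfl | hax
  · exact le_max_left _ _
  rcases hx.2.eq_or_lt with rfl | hxb
  · exact le_max_right _ _
  have hxm : x ∈ Ioo a b := ⟨hax, hxb⟩
  rcases le_or_gt (P x) 0 with hPx | hPx
  · have hanti : AntitoneOn g (Icc a x) := by
      refine antitoneOn_of_deriv_nonpos (convex_Icc a x)
        (hgc.mono (Icc_subset_Icc le_rfl hx.2)) ?_ fun s hs => ?_
      · rw [interior_Icc]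
        exact hgd.mono (Ioo_subset_Ioo_right hxb.le)
      · rw [interior_Icc] at hs
        have hsm : s ∈ Ioo a b := ⟨hs.1, hs.2.trans hxb⟩
        rw [hd s hsm]
        exact mul_nonpos_of_nonneg_of_nonpos (hρ s hsm).le ((hP hsm hxm hs.2.le).trans hPx)
    exact (hanti (left_mem_Icc.2 hx.1) (right_mem_Icc.2 hx.1) hx.1).trans (le_max_left _ _)
  · have hmono : MonotoneOn g (Icc x b) := by
      refine monotoneOn_of_deriv_nonneg (convex_Icc x b)
        (hgc.mono (Icc_subset_Icc hx.1 le_rfl)) ?_ fun s hs => ?_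
      · rw [interior_Icc]
        exact hgd.mono (Ioo_subset_Ioo_left hax.le)
      · rw [interior_Icc] at hs
        have hsm : s ∈ Ioo a b := ⟨hax.trans hs.1, hs.2⟩
        rw [hd s hsm]
        exact mul_nonneg (hρ s hsm).le (hPx.le.trans (hP hxm hsm hs.1.le))
    exact (hmono (left_mem_Icc.2 hx.2) (right_mem_Icc.2 hx.2) hx.2).trans (le_max_right _ _)

theorem monotoneOn_Ici_of_hasDerivAt {f f' : ℝ → ℝ} {R : ℝ}
    (hf : ∀ r ≥ R, HasDerivAt f (f' r) r) (hf' : ∀ r > R, 0 ≤ f' r) : MonotoneOn f (Ici R) :=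
  monotoneOn_of_hasDerivWithinAt_nonneg (convex_Ici R)
    (fun r hr => (hf r hr).continuousAt.continuousWithinAt)
    (fun r hr => (hf r (le_of_lt (by simpa using hr))).hasDerivWithinAt)
    (fun r hr => hf' r (by simpa using hr))

theorem antitoneOn_Ici_of_hasDerivAt {f f' : ℝ → ℝ} {R : ℝ}
    (hf : ∀ r ≥ R, HasDerivAt f (f' r) r) (hf' : ∀ r > R, f' r ≤ 0) : AntitoneOn f (Ici R) :=
  antitoneOn_of_hasDerivWithinAt_nonpos (convex_Ici R)
    (fun r hr => (hf r hr).continuousAt.continuousWithinAt)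
    (fun r hr => (hf r (le_of_lt (by simpa using hr))).hasDerivWithinAt)
    (fun r hr => hf' r (by simpa using hr))

theorem le_of_radial_sub_supersolution {n R : ℝ} {q w w' w'' Y Y' Y'' : ℝ → ℝ} (hR : 0 < R)
    (hw : ∀ r ≥ R, HasDerivAt w (w' r) r) (hw' : ∀ r ≥ R, HasDerivAt w' (w'' r) r)
    (hY : ∀ r ≥ R, HasDerivAt Y (Y' r) r) (hY' : ∀ r ≥ R, HasDerivAt Y' (Y'' r) r)
    (hw0 : ∀ r ≥ R, 0 ≤ w r) (hY0 : ∀ r ≥ R, 0 < Y r)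
    (hsub : ∀ r ≥ R, -(w'' r + (n - 1) / r * w' r) ≤ q r * w r)
    (hsuper : ∀ r ≥ R, q r * Y r ≤ -(Y'' r + (n - 1) / r * Y' r))
    (hwR : w R ≤ Y R) (hwT : ∃ᶠ T in atTop, w T ≤ Y T) :
    ∀ r ≥ R, w r ≤ Y r := by
  -- The Wronskian `P` is nondecreasing and `(w / Y)' = r ^ (1 - n) P / Y²`, so on `[R, T]` the
  -- quotient `w / Y` is largest at an endpoint.
  set P : ℝ → ℝ := fun s => s ^ (n - 1) * (w' s * Y s - w s * Y' s) with hP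
  have hPd : ∀ s ≥ R, HasDerivAt P (s ^ (n - 1) *
      ((w'' s + (n - 1) / s * w' s) * Y s - w s * (Y'' s + (n - 1) / s * Y' s))) s := by
    intro s hs
    have hs0 : 0 < s := hR.trans_le hs
    refine ((hasDerivAt_rpow_const (p := n - 1) (Or.inl hs0.ne')).mul
      (((hw' s hs).mul (hY s hs)).sub ((hw s hs).mul (hY' s hs)))).congr_deriv ?_
    simp only [Pi.mul_apply, Pi.sub_apply, rpow_sub_one hs0.ne']
    field_simp
    ring
  have hPmono : MonotoneOn P (Ici R) := monotoneOn_Ici_of_hasDerivAt hPd fun s hs => by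
    have h1 := mul_le_mul_of_nonneg_left (hsuper s hs.le) (hw0 s hs.le)
    have h2 := mul_le_mul_of_nonneg_right (hsub s hs.le) (hY0 s hs.le).le
    exact mul_nonneg (rpow_nonneg (hR.trans hs).le _) (by nlinarith)
  intro r hr
  obtain ⟨T, hT, hrT⟩ := (hwT.and_eventually (eventually_ge_atTop r)).exists
  have hquot := le_max_of_deriv_eq_mul_monotoneOn (g := fun s => w s / Y s)
    (ρ := fun s => s ^ (1 - n) / Y s ^ 2) (P := P)
    (fun s hs => ((hw s hs.1).continuousAt.div (hY s hs.1).continuousAt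
      (hY0 s hs.1).ne').continuousWithinAt)
    (fun s hs => ((hw s hs.1.le).differentiableAt.div (hY s hs.1.le).differentiableAt
      (hY0 s hs.1.le).ne').differentiableWithinAt)
    (fun s hs => by
      have hs0 : 0 < s := hR.trans hs.1
      rw [((hw s hs.1.le).fun_div (hY s hs.1.le) (hY0 s hs.1.le).ne').deriv]
      simp only [hP, rpow_sub hs0, rpow_one]
      field_simp)
    (fun s hs => div_pos (rpow_pos_of_pos (hR.trans hs.1) _) (pow_pos (hY0 s hs.1.le) 2))
    (hPmono.mono fun s hs => hs.1.le) ⟨hr, hrT⟩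
  have h1 : w R / Y R ≤ 1 := (div_le_one (hY0 R le_rfl)).2 hwR
  have h2 : w T / Y T ≤ 1 := (div_le_one (hY0 T (hr.trans hrT))).2 hT
  exact (div_le_one (hY0 r hr)).1 (hquot.trans (max_le h1 h2))

theorem le_neg_radial_op_rpow_neg {n a r : ℝ} (hr : 0 < r) (ha : 1 / 2 ≤ a * (n - 2 - a)) :
    1 / (2 * r ^ 2) * r ^ (-a) ≤
      -(-a * ((-a - 1) * r ^ (-a - 1 - 1)) + (n - 1) / r * (-a * r ^ (-a - 1))) := by
  have e : -(-a * ((-a - 1) * r ^ (-a - 1 - 1)) + (n - 1) / r * (-a * r ^ (-a - 1))) =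
      a * (n - 2 - a) * (1 / r ^ 2 * r ^ (-a)) := by
    rw [rpow_sub_one hr.ne', rpow_sub_one hr.ne']
    field_simp
    ring
  rw [e, show 1 / (2 * r ^ 2) * r ^ (-a) = 1 / 2 * (1 / r ^ 2 * r ^ (-a)) by field_simp]
  exact mul_le_mul_of_nonneg_right ha (by positivity)

/-- Compare `w` with `A r ^ (-γ) + ε r ^ (-δ)`, `γ = n - 5/2`, `δ = 1/2`; both exponents have
`a (n - 2 - a) = (n - 5/2) / 2 ≥ 1/2`, so these are supersolutions. -/
theorem le_rpow_of_hardy_subsolution {n R : ℝ} {w w' w'' : ℝ → ℝ} (hn : 7 / 2 ≤ n) (hR : 0 < R)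
    (hw : ∀ r ≥ R, HasDerivAt w (w' r) r) (hw' : ∀ r ≥ R, HasDerivAt w' (w'' r) r)
    (hw0 : ∀ r ≥ R, 0 ≤ w r)
    (hsub : ∀ r ≥ R, -(w'' r + (n - 1) / r * w' r) ≤ 1 / (2 * r ^ 2) * w r)
    (hlim : Tendsto (fun r => r ^ (1 / 2 : ℝ) * w r) atTop (𝓝 0)) :
    ∀ r ≥ R, w r ≤ w R * R ^ (n - 5 / 2) * r ^ (-(n - 5 / 2)) := by
  set γ := n - 5 / 2
  set δ : ℝ := 1 / 2
  obtain ⟨A, hA_def⟩ : ∃ A, A = w R * R ^ γ := ⟨_, rfl⟩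
  rw [← hA_def]
  have hA : 0 ≤ A := hA_def ▸ mul_nonneg (hw0 R le_rfl) (rpow_nonneg hR.le _)
  have key : ∀ ε > 0, ∀ r ≥ R, w r ≤ A * r ^ (-γ) + ε * r ^ (-δ) := by
    intro ε hε
    refine le_of_radial_sub_supersolution (q := fun r => 1 / (2 * r ^ 2)) hR hw hw'
      (Y' := fun r => A * (-γ * r ^ (-γ - 1)) + ε * (-δ * r ^ (-δ - 1)))
      (Y'' := fun r => A * (-γ * ((-γ - 1) * r ^ (-γ - 1 - 1))) +
        ε * (-δ * ((-δ - 1) * r ^ (-δ - 1 - 1))))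
      (fun r hr => ?_) (fun r hr => ?_) hw0 (fun r hr => ?_) hsub (fun r hr => ?_) ?_ ?_
    · have hr0 := (hR.trans_le hr).ne'
      exact ((hasDerivAt_rpow_const (Or.inl hr0)).const_mul A).add
        ((hasDerivAt_rpow_const (Or.inl hr0)).const_mul ε)
    · have hr0 := (hR.trans_le hr).ne'
      exact (((hasDerivAt_rpow_const (Or.inl hr0)).const_mul _).const_mul A).add
        (((hasDerivAt_rpow_const (Or.inl hr0)).const_mul _).const_mul ε)
    · have hr0 := hR.trans_le hr
      positivity
    · have hr0 := hR.trans_le hr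
      have hγ := le_neg_radial_op_rpow_neg (n := n) (a := γ) hr0 (by simp only [γ]; nlinarith)
      have hδ := le_neg_radial_op_rpow_neg (n := n) (a := δ) hr0 (by simp only [δ]; nlinarith)
      linarith [mul_le_mul_of_nonneg_left hγ hA, mul_le_mul_of_nonneg_left hδ hε.le]
    · have hAR : A * R ^ (-γ) = w R := by
        rw [hA_def, mul_assoc, ← rpow_add hR, add_neg_cancel, rpow_zero, mul_one]
      have : 0 < ε * R ^ (-δ) := by positivity
      linarith
    · refine ((hlim.eventually (gt_mem_nhds hε)).and (eventually_gt_atTop 0)).frequently.mono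
        fun T ⟨hT, hT0⟩ => ?_
      have h1 : w T ≤ ε * T ^ (-δ) := by
        rw [rpow_neg hT0.le, ← div_eq_mul_inv, le_div_iff₀ (by positivity)]
        linarith
      have h2 : 0 ≤ A * T ^ (-γ) := by positivity
      linarith
  intro r hr
  have hr0 := hR.trans_le hr
  refine le_of_forall_pos_le_add fun ε hε => ?_
  have := key (ε * r ^ δ) (by positivity) r hr
  rwa [mul_assoc ε, ← rpow_add hr0, add_neg_cancel, rpow_zero, mul_one] at this

theorem exists_neg_deriv_le_of_radial_source {n m c R : ℝ} {w' w'' : ℝ → ℝ} (hR : 0 < R)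
    (hm : 0 < m) (hc : 0 ≤ c) (hw' : ∀ r ≥ R, HasDerivAt w' (w'' r) r)
    (hsrc : ∀ r ≥ R, -(w'' r + (n - 1) / r * w' r) ≤ c * r ^ (-(n + m))) :
    ∃ C, ∀ r ≥ R, -w' r ≤ C * r ^ (1 - n) := by
  set Q : ℝ → ℝ := fun r => -(r ^ (n - 1) * w' r) + c / m * r ^ (-m)
  have hQd : ∀ r ≥ R, HasDerivAt Q
      (r ^ (n - 1) * (-(w'' r + (n - 1) / r * w' r) - c * r ^ (-(n + m)))) r := by
    intro r hr
    have hr0 := hR.trans_le hr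
    refine (((hasDerivAt_rpow_const (p := n - 1) (Or.inl hr0.ne')).mul (hw' r hr)).neg.add
      ((hasDerivAt_rpow_const (p := -m) (Or.inl hr0.ne')).const_mul _)).congr_deriv ?_
    have e : r ^ (-m - 1) = r ^ (n - 1) * r ^ (-(n + m)) := by
      rw [← rpow_add hr0]; ring_nf
    rw [e, rpow_sub_one hr0.ne' (n - 1)]
    field_simp
    ring
  have hQ : AntitoneOn Q (Ici R) := antitoneOn_Ici_of_hasDerivAt hQd fun s hs =>
    mul_nonpos_of_nonneg_of_nonpos (rpow_nonneg (hR.trans hs).le _) (sub_nonpos.2 (hsrc s hs.le))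
  refine ⟨Q R, fun r hr => ?_⟩
  have hr0 := hR.trans_le hr
  have h1 : Q r ≤ Q R := hQ self_mem_Ici hr hr
  have h2 : 0 ≤ c / m * r ^ (-m) := by positivity
  have h3 : r ^ (n - 1) * r ^ (1 - n) = 1 := by
    rw [← rpow_add hr0]; simp
  calc -w' r = -(r ^ (n - 1) * w' r) * r ^ (1 - n) := by linear_combination w' r * h3
    _ ≤ Q R * r ^ (1 - n) := by
      refine mul_le_mul_of_nonneg_right ?_ (rpow_nonneg hr0.le _)
      simp only [Q] at h1
      linarith

theorem le_rpow_of_neg_deriv_le_rpow {n R C : ℝ} {w w' : ℝ → ℝ} (hn : 2 < n) (hR : 0 < R)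
    (hw : ∀ r ≥ R, HasDerivAt w (w' r) r) (hlim : Tendsto w atTop (𝓝 0))
    (hgrad : ∀ r ≥ R, -w' r ≤ C * r ^ (1 - n)) :
    ∀ r ≥ R, w r ≤ C / (n - 2) * r ^ (2 - n) := by
  set S : ℝ → ℝ := fun r => w r - C / (n - 2) * r ^ (2 - n)
  have hSd : ∀ r ≥ R, HasDerivAt S (w' r + C * r ^ (1 - n)) r := by
    intro r hr
    have hr0 := hR.trans_le hr
    refine ((hw r hr).sub ((hasDerivAt_rpow_const (p := 2 - n) (Or.inl hr0.ne')).const_mul _))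
      |>.congr_deriv ?_
    rw [show (2 - n - 1 : ℝ) = 1 - n by ring]
    field_simp [(by linarith : n - 2 ≠ 0)]
    ring
  have hS : MonotoneOn S (Ici R) := monotoneOn_Ici_of_hasDerivAt hSd fun s hs => by
    linarith [hgrad s hs.le]
  have hSlim : Tendsto S atTop (𝓝 0) := by
    simpa using hlim.sub (((tendsto_rpow_neg_atTop (by linarith : 0 < n - 2)).const_mul
      (C / (n - 2))).congr fun r => by rw [neg_sub])
  intro r hr
  have : S r ≤ 0 := ge_of_tendsto hSlim ((eventually_ge_atTop r).mono fun t ht =>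
    hS hr (hr.trans ht) ht)
  linarith [show S r = w r - C / (n - 2) * r ^ (2 - n) from rfl]

theorem tendsto_rpow_mul_of_lt {a b : ℝ} {w : ℝ → ℝ} (hab : a < b)
    (h : Tendsto (fun r => r ^ b * w r) atTop (𝓝 0)) :
    Tendsto (fun r => r ^ a * w r) atTop (𝓝 0) := by
  have := (tendsto_rpow_neg_atTop (sub_pos.2 hab)).mul h
  rw [zero_mul] at this
  refine this.congr' ((eventually_gt_atTop 0).mono fun r hr => ?_)
  rw [← mul_assoc, ← rpow_add hr, neg_sub, sub_add_cancel]

theorem eventually_mul_rpow_sub_one_le_of_critical_decay {n p K : ℝ} {w : ℝ → ℝ} (hn : 2 < n)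
    (hp : p = 2 * n / (n - 2)) (hpos : ∀ r > 0, 0 < w r)
    (hlim : Tendsto (fun r => r ^ ((n - 2) / 2) * w r) atTop (𝓝 0)) :
    ∀ᶠ r in atTop, K * w r ^ (p - 1) ≤ 1 / (2 * r ^ 2) * w r := by
  have hn2 : 0 < n - 2 := by linarith
  have hp2 : p - 2 = 4 / (n - 2) := by rw [hp]; field_simp; ring
  have hp2pos : 0 < p - 2 := by rw [hp2]; positivity
  have hsmall : Tendsto (fun r => K * (r ^ ((n - 2) / 2) * w r) ^ (p - 2)) atTop (𝓝 0) := by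
    simpa [zero_rpow hp2pos.ne'] using (hlim.rpow_const (Or.inr hp2pos.le)).const_mul K
  filter_upwards [hsmall.eventually (ge_mem_nhds (by norm_num : (0 : ℝ) < 1 / 2)),
    eventually_gt_atTop 0] with r hr hr0
  have hwr := hpos r hr0
  rw [mul_rpow (rpow_nonneg hr0.le _) hwr.le, ← rpow_mul hr0.le,
    show (n - 2) / 2 * (p - 2) = 2 by rw [hp2]; field_simp; norm_num, rpow_two] at hr
  rw [show p - 1 = (p - 2) + 1 by ring, rpow_add hwr, rpow_one, div_mul_eq_mul_div, one_mul,
    le_div_iff₀ (by positivity)]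
  nlinarith [mul_le_mul_of_nonneg_right hr hwr.le]

theorem radial_decay_of_critical_subsolution {n p K : ℝ} {w w' w'' : ℝ → ℝ} (hn : 7 / 2 ≤ n)
    (hp : p = 2 * n / (n - 2)) (hK : 0 ≤ K)
    (hw : ∀ r > 0, HasDerivAt w (w' r) r) (hw' : ∀ r > 0, HasDerivAt w' (w'' r) r)
    (hpos : ∀ r > 0, 0 < w r)
    (hsub : ∀ r > 0, -(w'' r + (n - 1) / r * w' r) ≤ K * w r ^ (p - 1))
    (hlim : Tendsto (fun r => r ^ ((n - 2) / 2) * w r) atTop (𝓝 0)) :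
    ∃ R > 0, ∃ C, ∀ r ≥ R, w r ≤ C * r ^ (2 - n) ∧ -w' r ≤ C * r ^ (1 - n) := by
  have hn2 : 0 < n - 2 := by linarith
  have hp1 : 1 < p := by rw [hp, lt_div_iff₀ hn2]; linarith
  obtain ⟨R, hR⟩ := eventually_atTop.1
    ((eventually_mul_rpow_sub_one_le_of_critical_decay (K := K) (by linarith) hp hpos hlim).and
      (eventually_ge_atTop 1))
  have hR0 : 0 < R := zero_lt_one.trans_le (hR R le_rfl).2
  have hRpos : ∀ r ≥ R, 0 < r := fun r hr => hR0.trans_le hr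
  have hdecay := le_rpow_of_hardy_subsolution (by linarith) hR0 (fun r hr => hw r (hRpos r hr))
    (fun r hr => hw' r (hRpos r hr)) (fun r hr => (hpos r (hRpos r hr)).le)
    (fun r hr => (hsub r (hRpos r hr)).trans (hR r hr).1)
    (tendsto_rpow_mul_of_lt (by linarith) hlim)
  set A := w R * R ^ (n - 5 / 2)
  have hA : 0 ≤ A := mul_nonneg (hpos R hR0).le (rpow_nonneg hR0.le _)
  set m := (n - 5 / 2) * (p - 1) - n
  have hm : 0 < m := by
    have e : m = (3 / 2 * n - 5) / (n - 2) := by simp only [m]; rw [hp]; field_simp; ring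
    rw [e]
    exact div_pos (by linarith) hn2
  have hsrc : ∀ r ≥ R, -(w'' r + (n - 1) / r * w' r) ≤ K * A ^ (p - 1) * r ^ (-(n + m)) := by
    intro r hr
    have hr0 := hRpos r hr
    refine (hsub r hr0).trans ?_
    rw [mul_assoc]
    refine mul_le_mul_of_nonneg_left ?_ hK
    calc w r ^ (p - 1) ≤ (A * r ^ (-(n - 5 / 2))) ^ (p - 1) :=
          rpow_le_rpow (hpos r hr0).le (hdecay r hr) (by linarith)
      _ = A ^ (p - 1) * r ^ (-(n + m)) := by
          rw [mul_rpow hA (rpow_nonneg hr0.le _), ← rpow_mul hr0.le]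
          congr 2
          ring
  obtain ⟨C, hC⟩ := exists_neg_deriv_le_of_radial_source hR0 hm
    (by positivity) (fun r hr => hw' r (hRpos r hr)) hsrc
  have hwC := le_rpow_of_neg_deriv_le_rpow (by linarith) hR0 (fun r hr => hw r (hRpos r hr))
    (by simpa using tendsto_rpow_mul_of_lt (a := 0) (by linarith) hlim) hC
  refine ⟨R, hR0, max (C / (n - 2)) C, fun r hr => ⟨?_, ?_⟩⟩
  · exact (hwC r hr).trans
      (mul_le_mul_of_nonneg_right (le_max_left _ _) (rpow_nonneg (hRpos r hr).le _))
  · exact (hC r hr).trans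
      (mul_le_mul_of_nonneg_right (le_max_right _ _) (rpow_nonneg (hRpos r hr).le _))

theorem Integrable.add_rpow {α : Type*} [MeasurableSpace α] {μ : Measure α} {f g : α → ℝ}
    {p : ℝ} (hp : 1 ≤ p) (hf0 : ∀ x, 0 ≤ f x) (hg0 : ∀ x, 0 ≤ g x)
    (hfm : AEStronglyMeasurable f μ) (hgm : AEStronglyMeasurable g μ)
    (hf : Integrable (fun x => f x ^ p) μ) (hg : Integrable (fun x => g x ^ p) μ) :
    Integrable (fun x => (f x + g x) ^ p) μ := by
  refine ((hf.add hg).const_mul (2 ^ (p - 1))).mono'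
    ((hfm.add hgm).aemeasurable.pow_const p).aestronglyMeasurable
    (Eventually.of_forall fun x => ?_)
  have ha := hf0 x
  have hb := hg0 x
  rw [norm_of_nonneg (rpow_nonneg (add_nonneg ha hb) _)]
  show (f x + g x) ^ p ≤ 2 ^ (p - 1) * (f x ^ p + g x ^ p)
  lift f x to NNReal using ha with a
  lift g x to NNReal using hb with b
  exact_mod_cast NNReal.rpow_add_le_mul_rpow_add_rpow a b hp

theorem tendsto_rpow_mul_of_integrable_radial {F : Type*} [NormedAddCommGroup F]
    [NormedSpace ℝ F] [FiniteDimensional ℝ F] [Nontrivial F] [MeasurableSpace F] [BorelSpace F]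
    (μ : Measure F) [μ.IsAddHaarMeasure] {ψ : ℝ → ℝ} {p : ℝ} (hp : 0 < p)
    (hψ : AntitoneOn ψ (Ici 0)) (hψ0 : ∀ r ≥ 0, 0 ≤ ψ r)
    (hint : Integrable (fun x => ψ ‖x‖ ^ p) μ) :
    Tendsto (fun r => r ^ ((finrank ℝ F : ℝ) / p) * ψ r) atTop (𝓝 0) := by
  set d := finrank ℝ F
  set g : F → ℝ := fun x => ψ ‖x‖ ^ p
  have hg0 : ∀ x, 0 ≤ g x := fun x => rpow_nonneg (hψ0 _ (norm_nonneg x)) _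
  have htail : Tendsto (fun r => ∫ x in (ball 0 r)ᶜ, g x ∂μ) atTop (𝓝 0) := by
    have h := tendsto_setIntegral_of_antitone (μ := μ) (s := fun r : ℝ => (ball (0 : F) r)ᶜ)
      (fun r => measurableSet_ball.compl)
      (fun a b hab => compl_subset_compl.2 (ball_subset_ball hab))
      ⟨0, hint.integrableOn⟩
    rwa [iInter_eq_empty_iff.2 fun x => ⟨‖x‖ + 1, by simp⟩, Measure.restrict_empty,
      integral_zero_measure] at h
  have hv : 0 < μ.real (ball (0 : F) 1) :=
    ENNReal.toReal_pos (measure_ball_pos μ 0 one_pos).ne' measure_ball_lt_top.ne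
  have hbound : ∀ r > 0, r ^ d * ψ r ^ p ≤
      4 ^ d / μ.real (ball (0 : F) 1) * ∫ x in (ball 0 (r / 2))ᶜ, g x ∂μ := by
    intro r hr
    obtain ⟨c, hc⟩ := exists_norm_eq F (by positivity : 0 ≤ 3 * r / 4)
    have hB : ∀ y ∈ ball c (r / 4), r / 2 ≤ ‖y‖ ∧ ‖y‖ ≤ r := fun y hy => by
      rw [mem_ball, dist_eq_norm] at hy
      constructor <;> linarith [norm_sub_norm_le y c, norm_sub_norm_le c y, norm_sub_rev c y]
    have hvol : μ.real (ball c (r / 4)) = (r / 4) ^ d * μ.real (ball (0 : F) 1) := by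
      rw [measureReal_def, Measure.addHaar_ball_of_pos μ c (by positivity), ENNReal.toReal_mul,
        ENNReal.toReal_ofReal (by positivity), ← measureReal_def]
    have h1 : ψ r ^ p * μ.real (ball c (r / 4)) ≤ ∫ x in ball c (r / 4), g x ∂μ := by
      rw [mul_comm, ← smul_eq_mul, ← setIntegral_const]
      exact setIntegral_mono_on (integrableOn_const measure_ball_lt_top.ne) hint.integrableOn
        measurableSet_ball fun y hy => rpow_le_rpow (hψ0 r hr.le)
          (hψ (norm_nonneg y) hr.le (hB y hy).2) hp.le
    have h2 : ∫ x in ball c (r / 4), g x ∂μ ≤ ∫ x in (ball 0 (r / 2))ᶜ, g x ∂μ :=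
      setIntegral_mono_set hint.integrableOn (Eventually.of_forall hg0)
        (LE.le.eventuallyLE fun y hy => by simpa using (hB y hy).1)
    rw [hvol] at h1
    rw [div_mul_eq_mul_div, le_div_iff₀ hv]
    calc r ^ d * ψ r ^ p * μ.real (ball (0 : F) 1)
        = 4 ^ d * (ψ r ^ p * ((r / 4) ^ d * μ.real (ball (0 : F) 1))) := by
          rw [div_pow]; field_simp
      _ ≤ 4 ^ d * ∫ x in (ball 0 (r / 2))ᶜ, g x ∂μ := by gcongr; exact h1.trans h2
  have hlim : Tendsto (fun r => r ^ d * ψ r ^ p) atTop (𝓝 0) := by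
    refine squeeze_zero' ((eventually_ge_atTop 0).mono fun r hr =>
      mul_nonneg (pow_nonneg hr _) (rpow_nonneg (hψ0 r hr) _))
      ((eventually_gt_atTop 0).mono hbound) ?_
    simpa using (htail.comp (tendsto_id.atTop_div_const (by norm_num : (0 : ℝ) < 2))).const_mul
      (4 ^ d / μ.real (ball (0 : F) 1))
  have := hlim.rpow_const (p := 1 / p) (Or.inr (by positivity))
  rw [zero_rpow (by positivity)] at this
  refine this.congr' ((eventually_ge_atTop 0).mono fun r hr => ?_)
  rw [mul_rpow (by positivity) (rpow_nonneg (hψ0 r hr) _), ← rpow_mul (hψ0 r hr),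
    mul_one_div_cancel hp.ne', rpow_one, ← rpow_natCast, ← rpow_mul hr, mul_one_div]

theorem exists_le_mul_one_add_norm_rpow {F : Type*} [NormedAddCommGroup F] [ProperSpace F]
    {f : F → ℝ} (hf : Continuous f) {a R C : ℝ} (ha : a ≤ 0)
    (h : ∀ x, R ≤ ‖x‖ → f x ≤ C * ‖x‖ ^ a) :
    ∃ C' > 0, ∀ x, f x ≤ C' * (1 + ‖x‖) ^ a := by
  set R' := max R 1
  obtain ⟨B, hB⟩ := (isCompact_closedBall (0 : F) R').exists_bound_of_continuousOn hf.continuousOn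
  set C' := max (max (|B| * (1 + R') ^ (-a)) (max C 0 * 2 ^ (-a))) 1
  have hC' : 0 < C' := zero_lt_one.trans_le (le_max_right _ _)
  refine ⟨C', hC', fun x => ?_⟩
  have hx : 0 < 1 + ‖x‖ := by positivity
  rcases le_or_gt ‖x‖ R' with hxR | hxR
  · have hR' : 0 < 1 + R' := by positivity
    calc f x ≤ |B| := (le_abs_self _).trans ((hB x (mem_closedBall_zero_iff.2 hxR)).trans
          (le_abs_self _))
      _ = |B| * (1 + R') ^ (-a) * (1 + R') ^ a := by
          rw [mul_assoc, ← rpow_add hR', neg_add_cancel, rpow_zero, mul_one]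
      _ ≤ C' * (1 + ‖x‖) ^ a := by
          gcongr ?_ * ?_
          · exact (le_max_left _ _).trans (le_max_left _ _)
          · exact rpow_le_rpow_of_nonpos hx (by linarith) ha
  · have hx1 : 1 ≤ ‖x‖ := (le_max_right _ _).trans hxR.le
    calc f x ≤ max C 0 * ‖x‖ ^ a := (h x ((le_max_left _ _).trans hxR.le)).trans
          (mul_le_mul_of_nonneg_right (le_max_left _ _) (rpow_nonneg (norm_nonneg _) _))
      _ = max C 0 * 2 ^ (-a) * (2 * ‖x‖) ^ a := by
          rw [mul_rpow zero_le_two (norm_nonneg _), ← mul_assoc, mul_assoc _ (2 ^ (-a)),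
            ← rpow_add zero_lt_two, neg_add_cancel, rpow_zero, mul_one]
      _ ≤ C' * (1 + ‖x‖) ^ a := by
          gcongr ?_ * ?_
          · exact (le_max_right _ _).trans (le_max_left _ _)
          · exact rpow_le_rpow_of_nonpos hx (by linarith) ha

theorem exists_bounds_one_add_norm_of_radial_decay {F : Type*} [NormedAddCommGroup F]
    [InnerProductSpace ℝ F] [ProperSpace F] {φ χ : ℝ → ℝ} (hφ : ContDiff ℝ 1 φ)
    (hχ : ContDiff ℝ 1 χ) (hU : ContDiff ℝ 1 fun x : F => φ ‖x‖)
    (hV : ContDiff ℝ 1 fun x : F => χ ‖x‖) (hφ_anti : AntitoneOn φ (Ici 0))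
    (hχ_anti : AntitoneOn χ (Ici 0)) {n R C : ℝ} (hn : 2 ≤ n) (hR : 0 < R)
    (hC : ∀ r ≥ R, φ r + χ r ≤ C * r ^ (2 - n) ∧ -(deriv φ r + deriv χ r) ≤ C * r ^ (1 - n)) :
    ∃ C > (0 : ℝ), ∀ x : F, φ ‖x‖ + χ ‖x‖ ≤ C * (1 + ‖x‖) ^ (2 - n) ∧
      ‖fderiv ℝ (fun y => φ ‖y‖) x‖ + ‖fderiv ℝ (fun y => χ ‖y‖) x‖ ≤ C * (1 + ‖x‖) ^ (1 - n) := by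
  obtain ⟨C₁, hC₁, h₁⟩ := exists_le_mul_one_add_norm_rpow (f := fun x => φ ‖x‖ + χ ‖x‖)
    (hU.continuous.add hV.continuous) (a := 2 - n) (by linarith) fun x hx => (hC ‖x‖ hx).1
  obtain ⟨C₂, hC₂, h₂⟩ := exists_le_mul_one_add_norm_rpow
    (f := fun x => ‖fderiv ℝ (fun y => φ ‖y‖) x‖ + ‖fderiv ℝ (fun y => χ ‖y‖) x‖)
    ((hU.continuous_fderiv one_ne_zero).norm.add (hV.continuous_fderiv one_ne_zero).norm)
    (a := 1 - n) (C := C) (by linarith) fun x hx => by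
      have hx0 : x ≠ 0 := norm_pos_iff.1 (hR.trans_le hx)
      rw [norm_fderiv_radial_of_antitoneOn hφ_anti hx0 (hφ.differentiable one_ne_zero _),
        norm_fderiv_radial_of_antitoneOn hχ_anti hx0 (hχ.differentiable one_ne_zero _)]
      linarith [(hC ‖x‖ hx).2]
  refine ⟨max C₁ C₂, lt_max_of_lt_left hC₁, fun x => ⟨(h₁ x).trans ?_, (h₂ x).trans ?_⟩⟩ <;>
    gcongr
  exacts [le_max_left _ _, le_max_right _ _]

theorem coupled_nonlinearity_le {a b p μ₁ μ₂ β : ℝ} (ha : 0 ≤ a) (hb : 0 ≤ b) (hp : 2 ≤ p)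
    (hμ₁ : 0 ≤ μ₁) (hμ₂ : 0 ≤ μ₂) (hβ : 0 ≤ β) :
    μ₁ * a ^ (p - 1) + β * a ^ (p / 2 - 1) * b ^ (p / 2) +
        (μ₂ * b ^ (p - 1) + β * b ^ (p / 2 - 1) * a ^ (p / 2)) ≤
      (μ₁ + μ₂ + 2 * β) * (a + b) ^ (p - 1) := by
  have hmix : ∀ {s t : ℝ}, 0 ≤ s → 0 ≤ t → s ^ (p / 2 - 1) * t ^ (p / 2) ≤ (s + t) ^ (p - 1) := by
    intro s t hs ht
    rw [show p - 1 = (p / 2 - 1) + p / 2 by ring, rpow_add' (by positivity) (by linarith)]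
    gcongr <;> linarith
  have h1 : a ^ (p - 1) ≤ (a + b) ^ (p - 1) := rpow_le_rpow ha (by linarith) (by linarith)
  have h2 : b ^ (p - 1) ≤ (a + b) ^ (p - 1) := rpow_le_rpow hb (by linarith) (by linarith)
  have h3 := hmix ha hb
  have h4 := hmix hb ha
  rw [add_comm b] at h4
  nlinarith [mul_le_mul_of_nonneg_left h1 hμ₁, mul_le_mul_of_nonneg_left h2 hμ₂,
    mul_le_mul_of_nonneg_left h3 hβ, mul_le_mul_of_nonneg_left h4 hβ]

theorem neg_radial_op_add_le_of_system {N : ℕ} [Nonempty (Fin N)] {μ₁ μ₂ β p : ℝ}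
    (hμ₁ : 0 ≤ μ₁) (hμ₂ : 0 ≤ μ₂) (hβ : 0 ≤ β) (hp : 2 ≤ p) {φ χ : ℝ → ℝ}
    (hφ : ContDiff ℝ 2 φ) (hχ : ContDiff ℝ 2 χ)
    (hφ0 : ∀ x : EuclideanSpace ℝ (Fin N), 0 ≤ φ ‖x‖)
    (hχ0 : ∀ x : EuclideanSpace ℝ (Fin N), 0 ≤ χ ‖x‖)
    (heqU : ∀ x : EuclideanSpace ℝ (Fin N), -lap (fun y => φ ‖y‖) x =
      μ₁ * φ ‖x‖ ^ (p - 1) + β * φ ‖x‖ ^ (p / 2 - 1) * χ ‖x‖ ^ (p / 2))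
    (heqV : ∀ x : EuclideanSpace ℝ (Fin N), -lap (fun y => χ ‖y‖) x =
      μ₂ * χ ‖x‖ ^ (p - 1) + β * χ ‖x‖ ^ (p / 2 - 1) * φ ‖x‖ ^ (p / 2)) :
    ∀ r > 0, -(deriv (deriv φ) r + deriv (deriv χ) r + (N - 1) / r * (deriv φ r + deriv χ r)) ≤
      (μ₁ + μ₂ + 2 * β) * (φ r + χ r) ^ (p - 1) := by
  intro r hr
  obtain ⟨x, rfl⟩ := exists_norm_eq (EuclideanSpace ℝ (Fin N)) hr.le
  have hx : x ≠ 0 := norm_pos_iff.1 hr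
  have hU := heqU x
  have hV := heqV x
  rw [lap_radial hφ hx] at hU
  rw [lap_radial hχ hx] at hV
  linarith [coupled_nonlinearity_le (hφ0 x) (hχ0 x) hp hμ₁ hμ₂ hβ]

theorem stmt_15_general (N : ℕ) (hN : 5 ≤ N)
    (μ₁ μ₂ β : ℝ) (hμ₁ : 0 < μ₁) (hμ₂ : 0 < μ₂) (hβ : 0 < β)
    (twoStar : ℝ) (hts : twoStar = 2 * (N : ℝ) / ((N : ℝ) - 2))
    (U V : EuclideanSpace ℝ (Fin N) → ℝ)
    (hU : ContDiff ℝ 2 U) (hV : ContDiff ℝ 2 V)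
    (hUpos : ∀ x, 0 < U x) (hVpos : ∀ x, 0 < V x)
    (hUrad : ∃ φ : ℝ → ℝ, AntitoneOn φ (Set.Ici 0) ∧ ∀ x, U x = φ ‖x‖)
    (hVrad : ∃ φ : ℝ → ℝ, AntitoneOn φ (Set.Ici 0) ∧ ∀ x, V x = φ ‖x‖)
    (hU2 : Integrable (fun x => U x ^ twoStar))
    (hV2 : Integrable (fun x => V x ^ twoStar))
    (heqU : ∀ x, -lap U x =
      μ₁ * U x ^ (twoStar - 1) + β * U x ^ (twoStar / 2 - 1) * V x ^ (twoStar / 2))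
    (heqV : ∀ x, -lap V x =
      μ₂ * V x ^ (twoStar - 1) + β * V x ^ (twoStar / 2 - 1) * U x ^ (twoStar / 2)) :
    ∃ C > (0 : ℝ), ∀ x,
      U x + V x ≤ C * (1 + ‖x‖) ^ (2 - (N : ℝ)) ∧
      ‖fderiv ℝ U x‖ + ‖fderiv ℝ V x‖ ≤ C * (1 + ‖x‖) ^ (1 - (N : ℝ)) := by
  have : Nonempty (Fin N) := ⟨⟨0, by omega⟩⟩
  obtain ⟨φ, hφ, hφ_anti, rfl⟩ := exists_contDiff_antitoneOn_profile hU hUrad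
  obtain ⟨χ, hχ, hχ_anti, rfl⟩ := exists_contDiff_antitoneOn_profile hV hVrad
  have hn : (5 : ℝ) ≤ N := by exact_mod_cast hN
  have hp : 2 ≤ twoStar := by
    rw [hts, le_div_iff₀ (by linarith)]
    linarith
  have hpos : ∀ r ≥ 0, 0 < φ r + χ r := fun r hr => by
    obtain ⟨x, rfl⟩ := exists_norm_eq (EuclideanSpace ℝ (Fin N)) hr
    exact add_pos (hUpos x) (hVpos x)
  have hlim := tendsto_rpow_mul_of_integrable_radial volume (by linarith) (hφ_anti.add hχ_anti)
    (fun r hr => (hpos r hr).le) (Integrable.add_rpow (by linarith) (fun x => (hUpos x).le)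
      (fun x => (hVpos x).le) hU.continuous.aestronglyMeasurable
      hV.continuous.aestronglyMeasurable hU2 hV2)
  rw [finrank_euclideanSpace_fin, show (N : ℝ) / twoStar = (N - 2) / 2 by
    rw [hts]; field_simp] at hlim
  obtain ⟨R, hR, C, hC⟩ := radial_decay_of_critical_subsolution (by linarith) hts
    (by positivity) (fun r _ => (hφ.differentiable two_ne_zero r).hasDerivAt.add
      (hχ.differentiable two_ne_zero r).hasDerivAt)
    (fun r _ => (hφ.differentiable_deriv_two r).hasDerivAt.add
      (hχ.differentiable_deriv_two r).hasDerivAt) (fun r hr => hpos r hr.le)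
    (neg_radial_op_add_le_of_system hμ₁.le hμ₂.le hβ.le hp hφ hχ (fun x => (hUpos x).le)
      (fun x => (hVpos x).le) heqU heqV) hlim
  exact exists_bounds_one_add_norm_of_radial_decay (hφ.of_le one_le_two) (hχ.of_le one_le_two)
    (hU.of_le one_le_two) (hV.of_le one_le_two) hφ_anti hχ_anti (by linarith) hR hC

theorem stmt_15 (N : ℕ) (hN : 5 ≤ N)
    (μ₁ μ₂ β : ℝ) (hμ₁ : 0 < μ₁) (hμ₂ : 0 < μ₂) (hβ : 0 < β)
    (twoStar : ℝ) (hts : twoStar = 2 * (N : ℝ) / ((N : ℝ) - 2))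
    (U V : EuclideanSpace ℝ (Fin N) → ℝ)
    (hU : ContDiff ℝ 2 U) (hV : ContDiff ℝ 2 V)
    (hUpos : ∀ x, 0 < U x) (hVpos : ∀ x, 0 < V x)
    (hUrad : ∃ φ : ℝ → ℝ, AntitoneOn φ (Set.Ici 0) ∧ ∀ x, U x = φ ‖x‖)
    (hVrad : ∃ φ : ℝ → ℝ, AntitoneOn φ (Set.Ici 0) ∧ ∀ x, V x = φ ‖x‖)
    (hU1 : Integrable (fun x => ‖fderiv ℝ U x‖ ^ 2))
    (hV1 : Integrable (fun x => ‖fderiv ℝ V x‖ ^ 2))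
    (hU2 : Integrable (fun x => U x ^ twoStar))
    (hV2 : Integrable (fun x => V x ^ twoStar))
    (heqU : ∀ x, -lap U x =
      μ₁ * U x ^ (twoStar - 1) + β * U x ^ (twoStar / 2 - 1) * V x ^ (twoStar / 2))
    (heqV : ∀ x, -lap V x =
      μ₂ * V x ^ (twoStar - 1) + β * V x ^ (twoStar / 2 - 1) * U x ^ (twoStar / 2)) :
    ∃ C > (0 : ℝ), ∀ x,
      U x + V x ≤ C * (1 + ‖x‖) ^ (2 - (N : ℝ)) ∧
      ‖fderiv ℝ U x‖ + ‖fderiv ℝ V x‖ ≤ C * (1 + ‖x‖) ^ (1 - (N : ℝ)) :=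
  stmt_15_general N hN μ₁ μ₂ β hμ₁ hμ₂ hβ twoStar hts U V hU hV hUpos hVpos hUrad hVrad hU2 hV2 heqU
    heqV
end

section
/- Let N ≥ 5, ρ > 0, and let ψ : ℝᴺ → ℝ be continuously differentiable with 0 ≤ ψ ≤ 1, ψ ≡ 1 on B(0, ρ) and ψ ≡ 0 outside B(0, 2ρ). Let U : ℝᴺ → ℝ be continuously differentiable with 0 < U(x) ≤ C₀(1 + |x|)^{2-N} and |∇U(x)| ≤ C₀(1 + |x|)^{1-N} for some C₀ > 0, and with ∫_{ℝᴺ}|∇U|² dx < ∞. For ε > 0 set U_ε(x) = ε^{-(N-2)/2} U(x/ε) and u_ε = ψ U_ε. Then there exist c, C > 0 and ε₀ > 0 such that for all 0 < ε < ε₀: (i) ∫_{ℝᴺ} |∇u_ε|² dx ≤ ∫_{ℝᴺ} |∇U|² dx + C ε^{N-2}; (ii) ∫_{ℝᴺ} u_ε^{2*} dx ≥ ∫_{ℝᴺ} U^{2*} dx − C ε^{N}; (iii) ∫_{ℝᴺ} u_ε² dx ≥ c ε² − C ε^{N-2}, where 2* = 2N/(N-2). -/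
/-!
`U_ε` is the rescaling of `U` that leaves both `∫ ‖∇U‖²` and `∫ U ^ 2*` invariant, so on the
ball `B(0, ρ)`, where `ψ = 1`, the integrals of `u_ε` are those of `U` over `B(0, ρ/ε)`. The cut-off
only acts on the annulus `ρ ≤ ‖x‖ ≤ 2ρ`, where the decay of `U` and `∇U` makes both `U_ε` and
`∇U_ε` of size `ε^((N-2)/2)`; this costs `O(ε^(N-2))` in (i). In (ii) the loss is the tail
`∫_{‖x‖ ≥ ρ/ε} U ^ 2* ≲ ∫_{‖x‖ ≥ ρ/ε} (1 + ‖x‖)^(-2N) = O(ε^N)`, and in (iii) scaling gives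
`∫ u_ε² ≥ ε² ∫_{B(0, ρ)} U²`.
-/

open MeasureTheory Metric Module Pointwise

theorem rpow_critical_le_of_le_mul_rpow {N a C r : ℝ} (hN : 2 < N) (ha : 0 ≤ a) (hC : 0 ≤ C)
    (hr : 0 ≤ r) (h : a ≤ C * (1 + r) ^ (2 - N)) :
    a ^ (2 * N / (N - 2)) ≤ C ^ (2 * N / (N - 2)) * (1 + r) ^ (-(2 * N)) := by
  have hN2 : 0 < N - 2 := by linarith
  calc a ^ (2 * N / (N - 2)) ≤ (C * (1 + r) ^ (2 - N)) ^ (2 * N / (N - 2)) :=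
        Real.rpow_le_rpow ha h (by positivity)
    _ = C ^ (2 * N / (N - 2)) * (1 + r) ^ (-(2 * N)) := by
        rw [Real.mul_rpow hC (by positivity), ← Real.rpow_mul (by positivity)]
        congr 2
        field_simp
        ring

theorem setIntegral_rpow_le_integral_mul_rpow {X : Type*} [TopologicalSpace X]
    [MeasurableSpace X] [OpensMeasurableSpace X] (μ : Measure X) [IsFiniteMeasureOnCompacts μ]
    {ψ v : X → ℝ} {s : Set X} (hs : MeasurableSet s) (hψ : Continuous ψ) (hψs : HasCompactSupport ψ)
    (hψ0 : ∀ x, 0 ≤ ψ x) (hψ1 : ∀ x ∈ s, ψ x = 1) (hv : Continuous v) (hv0 : ∀ x, 0 ≤ v x)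
    {q : ℝ} (hq : 0 < q) :
    ∫ x in s, v x ^ q ∂μ ≤ ∫ x, (ψ x * v x) ^ q ∂μ := by
  have hint : Integrable (fun x => (ψ x * v x) ^ q) μ :=
    ((hψ.mul hv).rpow_const fun _ => Or.inr hq.le).integrable_of_hasCompactSupport
      (hψs.mul_right.comp_left (g := fun t : ℝ => t ^ q) (Real.zero_rpow hq.ne'))
  calc ∫ x in s, v x ^ q ∂μ = ∫ x in s, (ψ x * v x) ^ q ∂μ :=
        setIntegral_congr_fun hs fun x hx => by simp only [hψ1 x hx, one_mul]
    _ ≤ ∫ x, (ψ x * v x) ^ q ∂μ :=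
        setIntegral_le_integral hint (.of_forall fun x => by
          have := hψ0 x; have := hv0 x; positivity)

theorem setIntegral_ball_pos {X : Type*} [MetricSpace X] [ProperSpace X] [MeasurableSpace X]
    [OpensMeasurableSpace X] (μ : Measure X) [IsFiniteMeasureOnCompacts μ] [μ.IsOpenPosMeasure]
    {f : X → ℝ} (hf : Continuous f) (hpos : ∀ x, 0 < f x) (x₀ : X) {ρ : ℝ} (hρ : 0 < ρ) :
    0 < ∫ x in ball x₀ ρ, f x ∂μ := by
  rw [setIntegral_pos_iff_support_of_nonneg_ae (.of_forall fun x => (hpos x).le)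
    ((hf.continuousOn.integrableOn_compact (isCompact_closedBall x₀ ρ)).mono_set
      ball_subset_closedBall), Function.support_eq_univ fun x => (hpos x).ne', Set.univ_inter]
  exact measure_ball_pos μ x₀ hρ

variable {E : Type*} [NormedAddCommGroup E] [NormedSpace ℝ E]

section Scaling

variable [FiniteDimensional ℝ E] [MeasurableSpace E] [BorelSpace E]
  (μ : Measure E) [μ.IsAddHaarMeasure]

theorem setIntegral_ball_comp_inv_smul (f : E → ℝ) {ε : ℝ} (hε : 0 < ε) (r : ℝ) :
    ∫ x in ball 0 r, f (ε⁻¹ • x) ∂μ = ε ^ finrank ℝ E * ∫ x in ball 0 (r / ε), f x ∂μ := by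
  rw [Measure.setIntegral_comp_smul_of_pos μ f _ (inv_pos.2 hε),
    _root_.smul_ball (inv_ne_zero hε.ne'),
    smul_zero, norm_inv, Real.norm_of_nonneg hε.le, inv_mul_eq_div, smul_eq_mul, inv_pow, inv_inv]

theorem setIntegral_compl_ball_one_add_norm_rpow_le {s R : ℝ} (hs : (finrank ℝ E : ℝ) < s)
    (hR : 0 < R) :
    ∫ x in (ball 0 R)ᶜ, (1 + ‖x‖) ^ (-s) ∂μ
      ≤ 2 ^ s * (∫ x, (1 + ‖x‖) ^ (-s) ∂μ) * R ^ ((finrank ℝ E : ℝ) - s) := by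
  have hint := integrable_one_add_norm (μ := μ) hs
  have hs0 : 0 ≤ s := (Nat.cast_nonneg _).trans hs.le
  have hcompl : R • (ball (0 : E) 1)ᶜ = (ball 0 R)ᶜ := by
    ext y
    simp only [Set.mem_smul_set_iff_inv_smul_mem₀ hR.ne', Set.mem_compl_iff, mem_ball_zero_iff,
      norm_smul, norm_inv, Real.norm_of_nonneg hR.le, not_lt, le_inv_mul_iff₀ hR, mul_one]
  have hpt : ∀ y ∈ (ball (0 : E) 1)ᶜ,
      (1 + ‖R • y‖) ^ (-s) ≤ R ^ (-s) * (2 ^ s * (1 + ‖y‖) ^ (-s)) := by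
    intro y hy
    have hy1 : 1 ≤ ‖y‖ := by simpa using hy
    have hle : R / 2 * (1 + ‖y‖) ≤ 1 + ‖R • y‖ := by
      rw [norm_smul, Real.norm_of_nonneg hR.le]; nlinarith
    calc (1 + ‖R • y‖) ^ (-s) ≤ (R / 2 * (1 + ‖y‖)) ^ (-s) :=
          Real.rpow_le_rpow_of_nonpos (by positivity) hle (by linarith)
      _ = R ^ (-s) * (2 ^ s * (1 + ‖y‖) ^ (-s)) := by
          rw [Real.mul_rpow (by positivity) (by positivity), Real.div_rpow hR.le zero_le_two,
            Real.rpow_neg zero_le_two, div_eq_mul_inv, inv_inv]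
          ring
  calc ∫ x in (ball 0 R)ᶜ, (1 + ‖x‖) ^ (-s) ∂μ
      = R ^ finrank ℝ E * ∫ y in (ball (0 : E) 1)ᶜ, (1 + ‖R • y‖) ^ (-s) ∂μ := by
        rw [Measure.setIntegral_comp_smul_of_pos μ (fun x => (1 + ‖x‖) ^ (-s)) _ hR, hcompl,
          smul_eq_mul, ← mul_assoc, mul_inv_cancel₀ (by positivity), one_mul]
    _ ≤ R ^ finrank ℝ E * ∫ y in (ball (0 : E) 1)ᶜ, R ^ (-s) * (2 ^ s * (1 + ‖y‖) ^ (-s)) ∂μ := by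
        refine mul_le_mul_of_nonneg_left ?_ (by positivity)
        exact setIntegral_mono_on (hint.comp_smul hR.ne').integrableOn
          ((hint.const_mul _).const_mul _).integrableOn measurableSet_ball.compl hpt
    _ ≤ R ^ finrank ℝ E * (R ^ (-s) * (2 ^ s * ∫ y, (1 + ‖y‖) ^ (-s) ∂μ)) := by
        rw [integral_const_mul, integral_const_mul]
        refine mul_le_mul_of_nonneg_left (mul_le_mul_of_nonneg_left
          (mul_le_mul_of_nonneg_left ?_ (by positivity)) (by positivity)) (by positivity)
        exact setIntegral_le_integral hint (.of_forall fun y => by positivity)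
    _ = 2 ^ s * (∫ x, (1 + ‖x‖) ^ (-s) ∂μ) * R ^ ((finrank ℝ E : ℝ) - s) := by
        rw [sub_eq_add_neg, Real.rpow_add hR, Real.rpow_natCast]; ring

theorem integral_sub_le_setIntegral_ball {f : E → ℝ} {C s R : ℝ} (hs : (finrank ℝ E : ℝ) < s)
    (hR : 0 < R) (hf : Integrable f μ) (hf0 : ∀ x, 0 ≤ f x)
    (hfC : ∀ x, f x ≤ C * (1 + ‖x‖) ^ (-s)) :
    ∫ x, f x ∂μ - C * (2 ^ s * (∫ x, (1 + ‖x‖) ^ (-s) ∂μ) * R ^ ((finrank ℝ E : ℝ) - s))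
      ≤ ∫ x in ball 0 R, f x ∂μ := by
  have hC : 0 ≤ C := by simpa using (hf0 0).trans (hfC 0)
  have htail : ∫ x in (ball 0 R)ᶜ, f x ∂μ ≤ C * ∫ x in (ball 0 R)ᶜ, (1 + ‖x‖) ^ (-s) ∂μ := by
    rw [← integral_const_mul]
    exact setIntegral_mono_on hf.integrableOn
      ((integrable_one_add_norm hs).const_mul C).integrableOn measurableSet_ball.compl
      fun x _ => hfC x
  rw [← integral_add_compl measurableSet_ball hf]
  linarith [mul_le_mul_of_nonneg_left (setIntegral_compl_ball_one_add_norm_rpow_le μ hs hR) hC]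

end Scaling

theorem fderiv_eq_zero_of_eqOn_const {F : Type*} [NormedAddCommGroup F] [NormedSpace ℝ F]
    {f : E → F} {c : F} {s : Set E} (hs : IsOpen s) (hf : s.EqOn f fun _ => c) {x : E}
    (hx : x ∈ s) : fderiv ℝ f x = 0 := by
  have hfc : f =ᶠ[nhds x] fun _ => c := Filter.eventually_of_mem (hs.mem_nhds hx) hf
  rw [hfc.fderiv_eq, fderiv_const_apply]

theorem norm_fderiv_mul_sq_le {ψ v : E → ℝ} {x : E} (hψ : DifferentiableAt ℝ ψ x)
    (hv : DifferentiableAt ℝ v x) (hψ0 : 0 ≤ ψ x) (hψ1 : ψ x ≤ 1) (hv0 : 0 ≤ v x) {A B M : ℝ}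
    (hA : ‖fderiv ℝ v x‖ ≤ A) (hB : v x ≤ B) (hM : ‖fderiv ℝ ψ x‖ ≤ M) :
    ‖fderiv ℝ (fun y => ψ y * v y) x‖ ^ 2
      ≤ ‖fderiv ℝ v x‖ ^ 2 + (2 * A * (B * M) + (B * M) ^ 2) := by
  set s := ψ x * ‖fderiv ℝ v x‖
  set t := v x * ‖fderiv ℝ ψ x‖
  have hprod : ‖fderiv ℝ (fun y => ψ y * v y) x‖ ≤ s + t := by
    rw [fderiv_fun_mul hψ hv]
    refine (norm_add_le _ _).trans_eq ?_
    rw [norm_smul, norm_smul, Real.norm_of_nonneg hψ0, Real.norm_of_nonneg hv0]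
  have hs0 : 0 ≤ s := by positivity
  have ht0 : 0 ≤ t := by positivity
  have hs : s ≤ ‖fderiv ℝ v x‖ := mul_le_of_le_one_left (norm_nonneg _) hψ1
  have ht : t ≤ B * M := mul_le_mul hB hM (norm_nonneg _) (hv0.trans hB)
  calc ‖fderiv ℝ (fun y => ψ y * v y) x‖ ^ 2 ≤ (s + t) ^ 2 := by gcongr
    _ = s ^ 2 + 2 * s * t + t ^ 2 := by ring
    _ ≤ ‖fderiv ℝ v x‖ ^ 2 + (2 * A * (B * M) + (B * M) ^ 2) := by
      linarith [pow_le_pow_left₀ hs0 hs 2, pow_le_pow_left₀ ht0 ht 2,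
        mul_le_mul (hs.trans hA) ht ht0 (hs0.trans (hs.trans hA))]

theorem one_add_norm_inv_smul_rpow_le {q ε ρ : ℝ} (hq : q ≤ 0) (hε : 0 < ε) (hρ : 0 < ρ) {x : E}
    (hx : ρ ≤ ‖x‖) : (1 + ‖ε⁻¹ • x‖) ^ q ≤ ρ ^ q * ε ^ (-q) := by
  have h : ρ / ε ≤ 1 + ‖ε⁻¹ • x‖ := by
    rw [norm_smul, norm_inv, Real.norm_of_nonneg hε.le, inv_mul_eq_div]
    linarith [div_le_div_of_nonneg_right hx hε.le]
  calc (1 + ‖ε⁻¹ • x‖) ^ q ≤ (ρ / ε) ^ q := Real.rpow_le_rpow_of_nonpos (by positivity) h hq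
    _ = ρ ^ q * ε ^ (-q) := by rw [Real.div_rpow hρ.le hε.le, Real.rpow_neg hε.le, div_eq_mul_inv]

/-- The paper's `U_ε`, in dimension `d`. -/
noncomputable def criticalRescale (d ε : ℝ) (U : E → ℝ) (x : E) : ℝ :=
  ε ^ (-((d - 2) / 2)) * U (ε⁻¹ • x)

section Rescale

variable {U : E → ℝ} {d ε ρ C₀ : ℝ}

theorem criticalRescale_nonneg (hε : 0 ≤ ε) (hU0 : ∀ x, 0 ≤ U x) (x : E) :
    0 ≤ criticalRescale d ε U x :=
  mul_nonneg (Real.rpow_nonneg hε _) (hU0 _)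

theorem Continuous.criticalRescale (hU : Continuous U) : Continuous (criticalRescale d ε U) :=
  continuous_const.mul (hU.comp (continuous_const_smul _))

theorem hasFDerivAt_criticalRescale {U' : E →L[ℝ] ℝ} {x : E} (hU : HasFDerivAt U U' (ε⁻¹ • x)) :
    HasFDerivAt (criticalRescale d ε U) ((ε ^ (-((d - 2) / 2)) * ε⁻¹) • U') x := by
  refine ((hU.comp x (ε⁻¹ • ContinuousLinearMap.id ℝ E).hasFDerivAt).const_mul
    (ε ^ (-((d - 2) / 2)))).congr_fderiv ?_
  ext y
  simp [mul_assoc]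

theorem norm_fderiv_criticalRescale (hU : Differentiable ℝ U) (hε : 0 < ε) (x : E) :
    ‖fderiv ℝ (criticalRescale d ε U) x‖
      = ε ^ (-((d - 2) / 2)) * ε⁻¹ * ‖fderiv ℝ U (ε⁻¹ • x)‖ := by
  rw [(hasFDerivAt_criticalRescale (hU _).hasFDerivAt).fderiv, norm_smul,
    Real.norm_of_nonneg (by positivity)]

theorem criticalRescale_le_of_le_norm (hd : 2 ≤ d) (hC₀ : 0 ≤ C₀)
    (hUbd : ∀ x, U x ≤ C₀ * (1 + ‖x‖) ^ (2 - d)) (hε : 0 < ε) (hρ : 0 < ρ) {x : E}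
    (hx : ρ ≤ ‖x‖) : criticalRescale d ε U x ≤ C₀ * ρ ^ (2 - d) * ε ^ ((d - 2) / 2) := by
  have hpow : ε ^ (-((d - 2) / 2)) * ε ^ (-(2 - d)) = ε ^ ((d - 2) / 2) := by
    rw [← Real.rpow_add hε]; ring_nf
  calc criticalRescale d ε U x
      ≤ ε ^ (-((d - 2) / 2)) * (C₀ * (ρ ^ (2 - d) * ε ^ (-(2 - d)))) :=
        mul_le_mul_of_nonneg_left ((hUbd _).trans (mul_le_mul_of_nonneg_left
          (one_add_norm_inv_smul_rpow_le (by linarith) hε hρ hx) hC₀)) (by positivity)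
    _ = C₀ * ρ ^ (2 - d) * ε ^ ((d - 2) / 2) := by rw [← hpow]; ring

theorem norm_fderiv_criticalRescale_le_of_le_norm (hd : 1 ≤ d) (hC₀ : 0 ≤ C₀)
    (hU : Differentiable ℝ U) (hUgrad : ∀ x, ‖fderiv ℝ U x‖ ≤ C₀ * (1 + ‖x‖) ^ (1 - d))
    (hε : 0 < ε) (hρ : 0 < ρ) {x : E} (hx : ρ ≤ ‖x‖) :
    ‖fderiv ℝ (criticalRescale d ε U) x‖ ≤ C₀ * ρ ^ (1 - d) * ε ^ ((d - 2) / 2) := by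
  have hpow : ε ^ (-((d - 2) / 2)) * ε⁻¹ * ε ^ (-(1 - d)) = ε ^ ((d - 2) / 2) := by
    rw [← Real.rpow_neg_one, ← Real.rpow_add hε, ← Real.rpow_add hε]; ring_nf
  calc ‖fderiv ℝ (criticalRescale d ε U) x‖
      ≤ ε ^ (-((d - 2) / 2)) * ε⁻¹ * (C₀ * (ρ ^ (1 - d) * ε ^ (-(1 - d)))) := by
        rw [norm_fderiv_criticalRescale hU hε]
        exact mul_le_mul_of_nonneg_left ((hUgrad _).trans (mul_le_mul_of_nonneg_left
          (one_add_norm_inv_smul_rpow_le (by linarith) hε hρ hx) hC₀)) (by positivity)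
    _ = C₀ * ρ ^ (1 - d) * ε ^ ((d - 2) / 2) := by rw [← hpow]; ring

theorem norm_fderiv_mul_criticalRescale_sq_le {ψ : E → ℝ} {M : ℝ} (hd : 2 ≤ d)
    (hε : 0 < ε) (hρ : 0 < ρ) (hψ : Differentiable ℝ ψ) (hψ0 : ∀ x, 0 ≤ ψ x)
    (hψ1 : ∀ x, ψ x ≤ 1) (hψin : ∀ x ∈ ball (0 : E) ρ, ψ x = 1) (hM : ∀ x, ‖fderiv ℝ ψ x‖ ≤ M)
    (hC₀ : 0 ≤ C₀) (hU : Differentiable ℝ U) (hU0 : ∀ x, 0 ≤ U x)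
    (hUbd : ∀ x, U x ≤ C₀ * (1 + ‖x‖) ^ (2 - d))
    (hUgrad : ∀ x, ‖fderiv ℝ U x‖ ≤ C₀ * (1 + ‖x‖) ^ (1 - d)) (x : E) :
    ‖fderiv ℝ (fun y => ψ y * criticalRescale d ε U y) x‖ ^ 2
      ≤ ‖fderiv ℝ (criticalRescale d ε U) x‖ ^ 2 + (tsupport ψ).indicator
        (fun _ => (2 * (C₀ * ρ ^ (1 - d)) * (C₀ * ρ ^ (2 - d) * M) + (C₀ * ρ ^ (2 - d) * M) ^ 2)
          * ε ^ (d - 2)) x := by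
  have hv : Differentiable ℝ (criticalRescale d ε U) := fun y =>
    (hasFDerivAt_criticalRescale (hU _).hasFDerivAt).differentiableAt
  have hv0 := criticalRescale_nonneg (d := d) hε.le hU0 x
  have hM0 : 0 ≤ M := (norm_nonneg _).trans (hM x)
  by_cases hx : fderiv ℝ ψ x = 0
  · have h := norm_fderiv_mul_sq_le (hψ x) (hv x) (hψ0 x) (hψ1 x) hv0 le_rfl le_rfl
      (hx ▸ norm_zero.le)
    have hind := Set.indicator_nonneg (s := tsupport ψ) (fun _ _ =>
      (by positivity : (0 : ℝ) ≤ (2 * (C₀ * ρ ^ (1 - d)) * (C₀ * ρ ^ (2 - d) * M)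
        + (C₀ * ρ ^ (2 - d) * M) ^ 2) * ε ^ (d - 2))) x
    simp only [mul_zero, zero_pow two_ne_zero, add_zero] at h
    linarith
  · have hxρ : ρ ≤ ‖x‖ := not_lt.1 fun h =>
      hx (fderiv_eq_zero_of_eqOn_const isOpen_ball hψin (mem_ball_zero_iff.2 h))
    have he : (ε ^ ((d - 2) / 2)) ^ 2 = ε ^ (d - 2) := by
      rw [← Real.rpow_natCast, ← Real.rpow_mul hε.le]; ring_nf
    rw [Set.indicator_of_mem (support_fderiv_subset (𝕜 := ℝ) hx), ← he]
    refine (norm_fderiv_mul_sq_le (hψ x) (hv x) (hψ0 x) (hψ1 x) hv0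
      (norm_fderiv_criticalRescale_le_of_le_norm (by linarith) hC₀ hU hUgrad hε hρ hxρ)
      (criticalRescale_le_of_le_norm hd hC₀ hUbd hε hρ hxρ) (hM x)).trans_eq ?_
    ring

end Rescale

section Estimates

variable [FiniteDimensional ℝ E] [MeasurableSpace E] [BorelSpace E]
  (μ : Measure E) [μ.IsAddHaarMeasure] {N : ℕ} {d ε ρ C₀ : ℝ} {U ψ : E → ℝ}

theorem integral_norm_fderiv_criticalRescale_sq (hE : finrank ℝ E = N) (hU : Differentiable ℝ U)
    (hε : 0 < ε) :
    ∫ x, ‖fderiv ℝ (criticalRescale N ε U) x‖ ^ 2 ∂μ = ∫ x, ‖fderiv ℝ U x‖ ^ 2 ∂μ := by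
  have hscale : (ε ^ (-(((N : ℝ) - 2) / 2))) ^ 2 * ε⁻¹ ^ 2 * ε ^ N = 1 := by
    have ha : (ε ^ (-(((N : ℝ) - 2) / 2))) ^ 2 = (ε ^ N)⁻¹ * ε ^ 2 := by
      rw [← Real.rpow_natCast (ε ^ _) 2, ← Real.rpow_mul hε.le, ← Real.rpow_natCast ε N,
        ← Real.rpow_natCast ε 2, ← Real.rpow_neg hε.le, ← Real.rpow_add hε]
      push_cast; ring_nf
    rw [ha]
    field_simp
  simp_rw [norm_fderiv_criticalRescale hU hε, mul_pow]
  rw [integral_const_mul, Measure.integral_comp_inv_smul_of_nonneg μ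
    (fun y => ‖fderiv ℝ U y‖ ^ 2) hε.le, hE, smul_eq_mul, ← mul_assoc, hscale, one_mul]

theorem integrable_norm_fderiv_criticalRescale_sq (hU : Differentiable ℝ U) (hε : 0 < ε)
    (hUint : Integrable (fun x => ‖fderiv ℝ U x‖ ^ 2) μ) :
    Integrable (fun x => ‖fderiv ℝ (criticalRescale d ε U) x‖ ^ 2) μ := by
  simp_rw [norm_fderiv_criticalRescale hU hε, mul_pow]
  exact ((integrable_comp_smul_iff μ (fun y => ‖fderiv ℝ U y‖ ^ 2)
    (inv_ne_zero hε.ne')).2 hUint).const_mul _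

theorem setIntegral_ball_criticalRescale_rpow (hE : finrank ℝ E = N) (hU0 : ∀ x, 0 ≤ U x)
    (hε : 0 < ε) (q r : ℝ) :
    ∫ x in ball 0 r, criticalRescale N ε U x ^ q ∂μ
      = ε ^ ((N : ℝ) - q * (((N : ℝ) - 2) / 2)) * ∫ x in ball 0 (r / ε), U x ^ q ∂μ := by
  simp_rw [criticalRescale, Real.mul_rpow (Real.rpow_nonneg hε.le _) (hU0 _)]
  rw [integral_const_mul, setIntegral_ball_comp_inv_smul μ (fun y => U y ^ q) hε, hE, ← mul_assoc,
    ← Real.rpow_natCast, ← Real.rpow_mul hε.le, ← Real.rpow_add hε]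
  ring_nf

theorem exists_integral_norm_fderiv_mul_criticalRescale_sq_le (hE : finrank ℝ E = N)
    (hN : 2 ≤ N) (hρ : 0 < ρ) (hψ : ContDiff ℝ 1 ψ) (hψs : HasCompactSupport ψ)
    (hψ0 : ∀ x, 0 ≤ ψ x) (hψ1 : ∀ x, ψ x ≤ 1) (hψin : ∀ x ∈ ball (0 : E) ρ, ψ x = 1)
    (hC₀ : 0 ≤ C₀) (hU : Differentiable ℝ U) (hU0 : ∀ x, 0 ≤ U x)
    (hUbd : ∀ x, U x ≤ C₀ * (1 + ‖x‖) ^ (2 - (N : ℝ)))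
    (hUgrad : ∀ x, ‖fderiv ℝ U x‖ ≤ C₀ * (1 + ‖x‖) ^ (1 - (N : ℝ)))
    (hUint : Integrable (fun x => ‖fderiv ℝ U x‖ ^ 2) μ) :
    ∃ C, ∀ ε, 0 < ε →
      ∫ x, ‖fderiv ℝ (fun y => ψ y * criticalRescale N ε U y) x‖ ^ 2 ∂μ
        ≤ ∫ x, ‖fderiv ℝ U x‖ ^ 2 ∂μ + C * ε ^ ((N : ℝ) - 2) := by
  obtain ⟨M, hM⟩ :=
    (hψs.fderiv (𝕜 := ℝ)).exists_bound_of_continuous (hψ.continuous_fderiv one_ne_zero)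
  set K := 2 * (C₀ * ρ ^ (1 - (N : ℝ))) * (C₀ * ρ ^ (2 - (N : ℝ)) * M)
    + (C₀ * ρ ^ (2 - (N : ℝ)) * M) ^ 2
  refine ⟨K * μ.real (tsupport ψ), fun ε hε => ?_⟩
  have hind : Integrable ((tsupport ψ).indicator fun _ => K * ε ^ ((N : ℝ) - 2)) μ :=
    (integrableOn_const hψs.measure_lt_top.ne).integrable_indicator
      (isClosed_tsupport ψ).measurableSet
  calc ∫ x, ‖fderiv ℝ (fun y => ψ y * criticalRescale N ε U y) x‖ ^ 2 ∂μ
      ≤ ∫ x, (‖fderiv ℝ (criticalRescale N ε U) x‖ ^ 2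
          + (tsupport ψ).indicator (fun _ => K * ε ^ ((N : ℝ) - 2)) x) ∂μ :=
        integral_mono_of_nonneg (.of_forall fun _ => by positivity)
          ((integrable_norm_fderiv_criticalRescale_sq μ hU hε hUint).add hind)
          (.of_forall <| norm_fderiv_mul_criticalRescale_sq_le (by exact_mod_cast hN) hε hρ
            (hψ.differentiable one_ne_zero) hψ0 hψ1 hψin hM hC₀ hU hU0 hUbd hUgrad)
    _ = ∫ x, ‖fderiv ℝ U x‖ ^ 2 ∂μ + K * μ.real (tsupport ψ) * ε ^ ((N : ℝ) - 2) := by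
        rw [integral_add (integrable_norm_fderiv_criticalRescale_sq μ hU hε hUint) hind,
          integral_norm_fderiv_criticalRescale_sq μ hE hU hε,
          integral_indicator (isClosed_tsupport ψ).measurableSet, setIntegral_const, smul_eq_mul]
        ring

theorem exists_integral_rpow_sub_le_integral_mul_criticalRescale_rpow (hE : finrank ℝ E = N)
    (hN : 2 < N) (hρ : 0 < ρ) (hψ : Continuous ψ) (hψs : HasCompactSupport ψ)
    (hψ0 : ∀ x, 0 ≤ ψ x) (hψin : ∀ x ∈ ball (0 : E) ρ, ψ x = 1) (hC₀ : 0 ≤ C₀)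
    (hU : Continuous U) (hU0 : ∀ x, 0 ≤ U x) (hUbd : ∀ x, U x ≤ C₀ * (1 + ‖x‖) ^ (2 - (N : ℝ))) :
    ∃ C, ∀ ε, 0 < ε →
      ∫ x, U x ^ (2 * (N : ℝ) / ((N : ℝ) - 2)) ∂μ - C * ε ^ (N : ℝ)
        ≤ ∫ x, (ψ x * criticalRescale N ε U x) ^ (2 * (N : ℝ) / ((N : ℝ) - 2)) ∂μ := by
  set p := 2 * (N : ℝ) / ((N : ℝ) - 2) with hp_def
  have hN2 : (0 : ℝ) < N - 2 := by
    have : (2 : ℝ) < N := by exact_mod_cast hN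
    linarith
  have hp : 0 < p := by positivity
  have hs : (finrank ℝ E : ℝ) < 2 * N := by rw [hE]; linarith
  have hUp : ∀ x, U x ^ p ≤ C₀ ^ p * (1 + ‖x‖) ^ (-(2 * (N : ℝ))) := fun x =>
    rpow_critical_le_of_le_mul_rpow (by exact_mod_cast hN) (hU0 x) hC₀ (norm_nonneg x) (hUbd x)
  have hUpint : Integrable (fun x => U x ^ p) μ :=
    ((integrable_one_add_norm hs).const_mul (C₀ ^ p)).mono'
      (hU.rpow_const fun _ => Or.inr hp.le).aestronglyMeasurable
      (.of_forall fun x => by rw [Real.norm_of_nonneg (by have := hU0 x; positivity)]; exact hUp x)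
  refine ⟨C₀ ^ p * (2 ^ (2 * (N : ℝ)) * (∫ x, (1 + ‖x‖) ^ (-(2 * (N : ℝ))) ∂μ) * ρ ^ (-(N : ℝ))),
    fun ε hε => ?_⟩
  have hscale : ((N : ℝ) - p * (((N : ℝ) - 2) / 2)) = 0 := by rw [hp_def]; field_simp; ring
  calc ∫ x, U x ^ p ∂μ - C₀ ^ p * (2 ^ (2 * (N : ℝ)) * (∫ x, (1 + ‖x‖) ^ (-(2 * (N : ℝ))) ∂μ)
        * ρ ^ (-(N : ℝ))) * ε ^ (N : ℝ)
      = ∫ x, U x ^ p ∂μ - C₀ ^ p * (2 ^ (2 * (N : ℝ)) * (∫ x, (1 + ‖x‖) ^ (-(2 * (N : ℝ))) ∂μ)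
        * (ρ / ε) ^ ((finrank ℝ E : ℝ) - 2 * N)) := by
        rw [hE, Real.div_rpow hρ.le hε.le, show (N : ℝ) - 2 * N = -N by ring, Real.rpow_neg hε.le,
          div_eq_mul_inv, inv_inv]
        ring
    _ ≤ ∫ x in ball 0 (ρ / ε), U x ^ p ∂μ :=
        integral_sub_le_setIntegral_ball μ hs (div_pos hρ hε) hUpint
          (fun x => by have := hU0 x; positivity) hUp
    _ = ∫ x in ball 0 ρ, criticalRescale N ε U x ^ p ∂μ := by
        rw [setIntegral_ball_criticalRescale_rpow μ hE hU0 hε, hscale, Real.rpow_zero, one_mul]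
    _ ≤ ∫ x, (ψ x * criticalRescale N ε U x) ^ p ∂μ :=
        setIntegral_rpow_le_integral_mul_rpow μ measurableSet_ball hψ hψs hψ0 hψin
          hU.criticalRescale (criticalRescale_nonneg hε.le hU0) hp

theorem sq_mul_setIntegral_ball_le_integral_mul_criticalRescale_sq (hE : finrank ℝ E = N)
    (hρ : 0 ≤ ρ) (hψ : Continuous ψ) (hψs : HasCompactSupport ψ) (hψ0 : ∀ x, 0 ≤ ψ x)
    (hψin : ∀ x ∈ ball (0 : E) ρ, ψ x = 1) (hU : Continuous U) (hU0 : ∀ x, 0 ≤ U x) {ε : ℝ}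
    (hε : 0 < ε) (hε1 : ε ≤ 1) :
    ε ^ 2 * ∫ x in ball 0 ρ, U x ^ 2 ∂μ ≤ ∫ x, (ψ x * criticalRescale N ε U x) ^ 2 ∂μ := by
  have hmono : ∫ x in ball 0 ρ, U x ^ 2 ∂μ ≤ ∫ x in ball 0 (ρ / ε), U x ^ 2 ∂μ :=
    setIntegral_mono_set (((hU.pow 2).continuousOn.integrableOn_compact
      (isCompact_closedBall 0 (ρ / ε))).mono_set ball_subset_closedBall)
      (.of_forall fun x => sq_nonneg _) (ball_subset_ball (le_div_self hρ hε hε1)).eventuallyLE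
  have hscale : ((N : ℝ) - 2 * (((N : ℝ) - 2) / 2)) = 2 := by ring
  calc ε ^ 2 * ∫ x in ball 0 ρ, U x ^ 2 ∂μ ≤ ε ^ 2 * ∫ x in ball 0 (ρ / ε), U x ^ 2 ∂μ :=
        mul_le_mul_of_nonneg_left hmono (sq_nonneg ε)
    _ = ∫ x in ball 0 ρ, criticalRescale N ε U x ^ (2 : ℝ) ∂μ := by
        rw [setIntegral_ball_criticalRescale_rpow μ hE hU0 hε, hscale]
        simp_rw [Real.rpow_two]
    _ ≤ ∫ x, (ψ x * criticalRescale N ε U x) ^ (2 : ℝ) ∂μ :=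
        setIntegral_rpow_le_integral_mul_rpow μ measurableSet_ball hψ hψs hψ0 hψin
          hU.criticalRescale (criticalRescale_nonneg hε.le hU0) two_pos
    _ = ∫ x, (ψ x * criticalRescale N ε U x) ^ 2 ∂μ := by simp_rw [Real.rpow_two]

end Estimates

theorem stmt_16 (N : ℕ) (hN : 5 ≤ N) (ρ : ℝ) (hρ : 0 < ρ)
    (ψ : EuclideanSpace ℝ (Fin N) → ℝ) (hψ : ContDiff ℝ 1 ψ)
    (hψ0 : ∀ x, 0 ≤ ψ x) (hψ1 : ∀ x, ψ x ≤ 1)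
    (hψin : ∀ x ∈ Metric.closedBall (0 : EuclideanSpace ℝ (Fin N)) ρ, ψ x = 1)
    (hψout : ∀ x ∉ Metric.closedBall (0 : EuclideanSpace ℝ (Fin N)) (2 * ρ), ψ x = 0)
    (C₀ : ℝ) (hC₀ : 0 < C₀)
    (U : EuclideanSpace ℝ (Fin N) → ℝ) (hU : ContDiff ℝ 1 U)
    (hUpos : ∀ x, 0 < U x)
    (hUbd : ∀ x, U x ≤ C₀ * (1 + ‖x‖) ^ (2 - (N : ℝ)))
    (hUgrad : ∀ x, ‖fderiv ℝ U x‖ ≤ C₀ * (1 + ‖x‖) ^ (1 - (N : ℝ)))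
    (hUint : Integrable (fun x => ‖fderiv ℝ U x‖ ^ 2)) :
    ∃ c > (0 : ℝ), ∃ C > (0 : ℝ), ∃ ε₀ > (0 : ℝ), ∀ ε : ℝ, 0 < ε → ε < ε₀ →
      (∫ x, ‖fderiv ℝ
          (fun y => ψ y * (ε ^ (-(((N : ℝ) - 2) / 2)) * U (ε⁻¹ • y))) x‖ ^ 2)
        ≤ (∫ x, ‖fderiv ℝ U x‖ ^ 2) + C * ε ^ ((N : ℝ) - 2) ∧
      (∫ x, U x ^ (2 * (N : ℝ) / ((N : ℝ) - 2))) - C * ε ^ (N : ℝ)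
        ≤ (∫ x, (ψ x * (ε ^ (-(((N : ℝ) - 2) / 2)) * U (ε⁻¹ • x)))
            ^ (2 * (N : ℝ) / ((N : ℝ) - 2))) ∧
      c * ε ^ 2 - C * ε ^ ((N : ℝ) - 2)
        ≤ ∫ x, (ψ x * (ε ^ (-(((N : ℝ) - 2) / 2)) * U (ε⁻¹ • x))) ^ 2 := by
  have hE := finrank_euclideanSpace_fin (𝕜 := ℝ) (n := N)
  have hψs : HasCompactSupport ψ := .intro (isCompact_closedBall 0 (2 * ρ)) hψout
  have hψball : ∀ x ∈ ball (0 : EuclideanSpace ℝ (Fin N)) ρ, ψ x = 1 :=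
    fun x hx => hψin x (ball_subset_closedBall hx)
  have hU0 : ∀ x, 0 ≤ U x := fun x => (hUpos x).le
  obtain ⟨C₁, h₁⟩ := exists_integral_norm_fderiv_mul_criticalRescale_sq_le volume hE (by omega)
    hρ hψ hψs hψ0 hψ1 hψball hC₀.le (hU.differentiable one_ne_zero) hU0 hUbd hUgrad hUint
  obtain ⟨C₂, h₂⟩ := exists_integral_rpow_sub_le_integral_mul_criticalRescale_rpow volume hE
    (by omega) hρ hψ.continuous hψs hψ0 hψball hC₀.le hU.continuous hU0 hUbd
  set C := max (max C₁ C₂) 1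
  have hC : 0 < C := zero_lt_one.trans_le (le_max_right _ _)
  refine ⟨_, setIntegral_ball_pos volume (hU.continuous.pow 2) (fun x => pow_pos (hUpos x) 2) 0 hρ,
    C, hC, 1, one_pos, fun ε hε hε1 => ⟨?_, ?_, ?_⟩⟩
  · refine (h₁ ε hε).trans ?_
    gcongr
    exact (le_max_left _ _).trans (le_max_left _ _)
  · refine le_trans ?_ (h₂ ε hε)
    gcongr
    exact (le_max_right _ _).trans (le_max_left _ _)
  · rw [mul_comm]
    exact (sub_le_self _ (mul_nonneg hC.le (Real.rpow_nonneg hε.le _))).trans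
      (sq_mul_setIntegral_ball_le_integral_mul_criticalRescale_sq volume hE hρ.le hψ.continuous
        hψs hψ0 hψball hU.continuous hU0 hε hε1.le)
end

section
/- Let 1 < q < 2 and a, b, c > 0. Define F(s) = (1/2 − 1/(2q)) (a + s² b)^{q/(q-1)} (a + |s|^{2q} b + 2|s|^{q} c)^{-1/(q-1)} for s ∈ ℝ. Then F(0) = (1/2 − 1/(2q)) a, lim_{s → 0} (F(0) − F(s))/|s|^{q} = F(0) · 2c/(a(q-1)) > 0, and consequently there exists δ > 0 such that F(s) < F(0) for all s with 0 < |s| < δ. -/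
open Real Filter
open scoped Topology

/-!
Substituting `t = |s| ^ q` gives `F s = (1/2 - 1/(2q)) * reducedEnergy q a b c t`. Since
`2 / q > 1`, the term `t ^ (2 / q)` has zero derivative at `t = 0`, so `reducedEnergy` is
differentiable there with derivative `-2c / (q - 1)`: only the `2 |s| ^ q c` term contributes at
first order. Hence `(F 0 - F s) / |s| ^ q` tends to a positive limit and `F s < F 0` for small
`s ≠ 0`.
-/

noncomputable def reducedEnergy (q a b c t : ℝ) : ℝ :=
  (a + t ^ (2 / q) * b) ^ (q / (q - 1)) * (a + t ^ 2 * b + 2 * t * c) ^ (-(1 / (q - 1)))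

theorem rpow_div_sub_one_mul_rpow_neg_inv {a q : ℝ} (ha : 0 < a) (hq : q ≠ 1) :
    a ^ (q / (q - 1)) * a ^ (-(1 / (q - 1))) = a := by
  have hq' : q - 1 ≠ 0 := sub_ne_zero.mpr hq
  rw [← rpow_add ha, show q / (q - 1) + -(1 / (q - 1)) = 1 by field_simp; ring, rpow_one]

namespace reducedEnergy

variable {q a : ℝ} (b c : ℝ)

theorem apply_zero (hq0 : 0 < q) (hq1 : q ≠ 1) (ha : 0 < a) :
    reducedEnergy q a b c 0 = a := by
  rw [reducedEnergy, zero_rpow (div_pos two_pos hq0).ne']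
  simpa using rpow_div_sub_one_mul_rpow_neg_inv ha hq1

theorem apply_abs_rpow (hq : 0 < q) (s : ℝ) :
    reducedEnergy q a b c (|s| ^ q) =
      (a + s ^ 2 * b) ^ (q / (q - 1)) *
        (a + |s| ^ (2 * q) * b + 2 * |s| ^ q * c) ^ (-(1 / (q - 1))) := by
  have h1 : (|s| ^ q) ^ (2 / q) = s ^ 2 := by
    rw [← rpow_mul (abs_nonneg s), mul_div_cancel₀ _ hq.ne', rpow_two, sq_abs]
  have h2 : (|s| ^ q) ^ 2 = |s| ^ (2 * q) := by
    rw [← rpow_two, ← rpow_mul (abs_nonneg s), mul_comm]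
  rw [reducedEnergy, h1, h2]

theorem hasDerivAt_zero (hq1 : 1 < q) (hq2 : q < 2) (ha : 0 < a) :
    HasDerivAt (reducedEnergy q a b c) (-(2 * c / (q - 1))) 0 := by
  have hq0 : 0 < q := by linarith
  have hq1' : q - 1 ≠ 0 := by linarith
  have hexp : 1 < 2 / q := (one_lt_div hq0).mpr hq2
  have hzero : (0 : ℝ) ^ (2 / q) = 0 := zero_rpow (div_pos two_pos hq0).ne'
  have hbase : HasDerivAt (fun t : ℝ => a + t ^ (2 / q) * b) 0 0 := by
    refine (((hasDerivAt_rpow_const (x := 0) (Or.inr hexp.le)).mul_const b).const_add a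
      ).congr_deriv ?_
    rw [zero_rpow (sub_pos.mpr hexp).ne']
    ring
  have hlin : HasDerivAt (fun t : ℝ => a + t ^ 2 * b + 2 * t * c) (2 * c) 0 := by
    refine ((((hasDerivAt_pow 2 (0 : ℝ)).mul_const b).const_add a).add
      (((hasDerivAt_id (0 : ℝ)).const_mul 2).mul_const c)).congr_deriv ?_
    simp
  have hprod := (hbase.rpow_const (p := q / (q - 1)) (Or.inl (by simp [hzero, ha.ne']))).mul
    (hlin.rpow_const (p := -(1 / (q - 1))) (Or.inl (by simp [ha.ne'])))
  have hpow : a ^ (q / (q - 1)) * a ^ (-(q - 1)⁻¹ - 1) = 1 := by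
    rw [← rpow_add ha, show q / (q - 1) + (-(q - 1)⁻¹ - 1) = 0 by field_simp; ring, rpow_zero]
  refine hprod.congr_deriv ?_
  norm_num [hzero]
  linear_combination (2 * c * (q - 1)⁻¹) * hpow

end reducedEnergy

theorem tendsto_abs_rpow_nhdsNE_zero {q : ℝ} (hq : 0 < q) :
    Tendsto (fun s : ℝ => |s| ^ q) (𝓝[≠] 0) (𝓝[≠] 0) := by
  refine tendsto_nhdsWithin_iff.mpr ⟨?_, ?_⟩
  · have hcont : Continuous fun s : ℝ => |s| ^ q :=
      (continuous_rpow_const hq.le).comp continuous_abs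
    simpa [zero_rpow hq.ne'] using hcont.tendsto 0 |>.mono_left nhdsWithin_le_nhds
  · filter_upwards [self_mem_nhdsWithin] with s hs
    exact (rpow_pos_of_pos (abs_pos.mpr hs) q).ne'

theorem exists_pos_forall_of_eventually_nhdsNE_zero {p : ℝ → Prop}
    (h : ∀ᶠ s in 𝓝[≠] (0 : ℝ), p s) : ∃ δ > (0 : ℝ), ∀ s : ℝ, 0 < |s| → |s| < δ → p s := by
  obtain ⟨δ, hδ, hp⟩ := Metric.eventually_nhds_iff.mp (eventually_nhdsWithin_iff.mp h)
  exact ⟨δ, hδ, fun s hs hsδ => hp (by simpa [Real.dist_eq] using hsδ) (abs_pos.mp hs)⟩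

theorem stmt_18_general (q : ℝ) (hq1 : 1 < q) (hq2 : q < 2)
    (a b c : ℝ) (ha : 0 < a) (hc : 0 < c)
    (F : ℝ → ℝ)
    (hF : ∀ s : ℝ, F s = (1 / 2 - 1 / (2 * q)) * (a + s ^ 2 * b) ^ (q / (q - 1)) *
      (a + |s| ^ (2 * q) * b + 2 * |s| ^ q * c) ^ (-(1 / (q - 1)))) :
    F 0 = (1 / 2 - 1 / (2 * q)) * a ∧
    Tendsto (fun s : ℝ => (F 0 - F s) / |s| ^ q) (nhdsWithin 0 {(0 : ℝ)}ᶜ)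
      (nhds (F 0 * (2 * c / (a * (q - 1))))) ∧
    0 < F 0 * (2 * c / (a * (q - 1))) ∧
    ∃ δ > (0 : ℝ), ∀ s : ℝ, 0 < |s| → |s| < δ → F s < F 0 := by
  have hq0 : 0 < q := by linarith
  set C := 1 / 2 - 1 / (2 * q)
  have hC : 0 < C := by
    rw [sub_pos, div_lt_div_iff₀ (by positivity) two_pos]
    linarith
  have hFR : ∀ s, F s = C * reducedEnergy q a b c (|s| ^ q) := fun s => by
    rw [hF, reducedEnergy.apply_abs_rpow b c hq0, mul_assoc]
  have hF0 : F 0 = C * a := by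
    rw [hFR, abs_zero, zero_rpow hq0.ne', reducedEnergy.apply_zero b c hq0 hq1.ne' ha]
  have hlim : Tendsto (fun s : ℝ => (F 0 - F s) / |s| ^ q) (𝓝[≠] 0)
      (𝓝 (F 0 * (2 * c / (a * (q - 1))))) := by
    have hslope := ((hasDerivAt_iff_tendsto_slope.mp
      (reducedEnergy.hasDerivAt_zero b c hq1 hq2 ha)).comp
      (tendsto_abs_rpow_nhdsNE_zero hq0)).const_mul (-C)
    rw [show -C * -(2 * c / (q - 1)) = F 0 * (2 * c / (a * (q - 1))) by
      rw [hF0]; field_simp] at hslope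
    refine hslope.congr fun s => ?_
    rw [Function.comp_apply, slope_def_field, hFR s, hFR 0, abs_zero, zero_rpow hq0.ne', sub_zero]
    ring
  have hpos : 0 < F 0 * (2 * c / (a * (q - 1))) := by
    rw [hF0]
    exact mul_pos (mul_pos hC ha) (div_pos (by positivity) (mul_pos ha (by linarith)))
  refine ⟨hF0, hlim, hpos, exists_pos_forall_of_eventually_nhdsNE_zero ?_⟩
  filter_upwards [hlim.eventually (eventually_gt_nhds hpos), self_mem_nhdsWithin] with s hs hs0
  have := (div_pos_iff_of_pos_right (rpow_pos_of_pos (abs_pos.mpr hs0) q)).mp hs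
  linarith

theorem stmt_18 (q : ℝ) (hq1 : 1 < q) (hq2 : q < 2)
    (a b c : ℝ) (ha : 0 < a) (hb : 0 < b) (hc : 0 < c)
    (F : ℝ → ℝ)
    (hF : ∀ s : ℝ, F s = (1 / 2 - 1 / (2 * q)) * (a + s ^ 2 * b) ^ (q / (q - 1)) *
      (a + |s| ^ (2 * q) * b + 2 * |s| ^ q * c) ^ (-(1 / (q - 1)))) :
    F 0 = (1 / 2 - 1 / (2 * q)) * a ∧
    Tendsto (fun s : ℝ => (F 0 - F s) / |s| ^ q) (nhdsWithin 0 {(0 : ℝ)}ᶜ)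
      (nhds (F 0 * (2 * c / (a * (q - 1))))) ∧
    0 < F 0 * (2 * c / (a * (q - 1))) ∧
    ∃ δ > (0 : ℝ), ∀ s : ℝ, 0 < |s| → |s| < δ → F s < F 0 :=
  stmt_18_general q hq1 hq2 a b c ha hc F hF
end
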